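/- arXiv:2111.02855 — 7 statements merged into one kernel-verified Lean document; each statement's English description precedes it below -/
import Mathlib

section
/- Let B be a k×M real matrix (k ≤ M) whose rows are orthonormal, i.e. B Bᵀ = I_k. Then B has a k×k submatrix U (obtained by selecting k columns of B) such that |det U| ≥ (k! / M^k)^{1/2}. -/
open Matrix Finset in
lemma det_mul_transpose_expand (k M : ℕ) (B : Matrix (Fin k) (Fin M) ℝ) :
    (B * B.transpose).det =
      ∑ f : Fin k → Fin M, (∏ i, B i (f i)) * (B.submatrix id f).det := by
  classical
  calc (B * B.transpose).det
      = Matrix.detRowAlternating (fun i => ∑ x : Fin M, B i x • B.transpose x) := by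
        congr 1; ext i j; simp [Matrix.mul_apply, Finset.sum_apply]
    _ = ∑ f : Fin k → Fin M,
          Matrix.detRowAlternating (fun i => B i (f i) • B.transpose (f i)) :=
        Matrix.detRowAlternating.toMultilinearMap.map_sum
          (fun i x => B i x • B.transpose x)
    _ = ∑ f : Fin k → Fin M, (∏ i, B i (f i)) * (B.submatrix id f).det := by
        refine Finset.sum_congr rfl fun f _ => ?_
        have := Matrix.detRowAlternating.toMultilinearMap.map_smul_univ
          (fun i => B i (f i)) (fun i => B.transpose (f i))
        rw [show (Matrix.detRowAlternating fun i => B i (f i) • B.transpose (f i)) =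
            Matrix.detRowAlternating.toMultilinearMap (fun i => B i (f i) • B.transpose (f i)) from rfl,
          this, smul_eq_mul]
        congr 1
        rw [← Matrix.det_transpose (B.submatrix id f), Matrix.transpose_submatrix]
        rfl

open Matrix Finset in
lemma sum_perm_square (k M : ℕ) (B : Matrix (Fin k) (Fin M) ℝ) (g : Fin k → Fin M) :
    ∑ σ : Equiv.Perm (Fin k),
        (∏ i, B i (g (σ i))) * (B.submatrix id (g ∘ ⇑σ)).det =
      (B.submatrix id g).det ^ 2 := by
  classical
  set A := B.submatrix id g with hA
  have h1 : ∀ σ : Equiv.Perm (Fin k),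
      (B.submatrix id (g ∘ ⇑σ)).det = (Equiv.Perm.sign σ : ℝ) * A.det := by
    intro σ
    have : B.submatrix id (g ∘ ⇑σ) = A.submatrix id ⇑σ := rfl
    rw [this, Matrix.det_permute']
  have h2 : A.det = ∑ σ : Equiv.Perm (Fin k), (Equiv.Perm.sign σ : ℝ) * ∏ i, A i (σ i) := by
    conv_lhs => rw [← Matrix.det_transpose A]
    rw [Matrix.det_apply']
    refine Finset.sum_congr rfl fun σ _ => ?_
    simp [Matrix.transpose_apply]
  calc ∑ σ : Equiv.Perm (Fin k), (∏ i, B i (g (σ i))) * (B.submatrix id (g ∘ ⇑σ)).det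
      = (∑ σ : Equiv.Perm (Fin k), (Equiv.Perm.sign σ : ℝ) * ∏ i, A i (σ i)) * A.det := by
        rw [Finset.sum_mul]
        refine Finset.sum_congr rfl fun σ _ => ?_
        rw [h1 σ]
        have : ∀ i, B i (g (σ i)) = A i (σ i) := fun i => rfl
        simp only [this]
        ring
    _ = A.det ^ 2 := by rw [← h2]; ring

open Matrix Finset in
lemma sum_inj_regroup (k M : ℕ) (F : (Fin k → Fin M) → ℝ) :
    ∑ s ∈ (powersetCard k (univ : Finset (Fin M))).attach,
      ∑ σ : Equiv.Perm (Fin k),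
        F ((s.1.orderEmbOfFin (mem_powersetCard.mp s.2).2) ∘ ⇑σ) =
    ∑ f ∈ (univ : Finset (Fin k → Fin M)).filter (fun f => Function.Injective f), F f := by
  classical
  rw [← Finset.sum_product' (f := fun (s : {x // x ∈ powersetCard k (univ : Finset (Fin M))}) (σ : Equiv.Perm (Fin k)) => F ((s.1.orderEmbOfFin (mem_powersetCard.mp s.2).2) ∘ ⇑σ))]
  refine Finset.sum_bij
    (fun p _ => (p.1.1.orderEmbOfFin (mem_powersetCard.mp p.1.2).2) ∘ ⇑p.2)
    ?_ ?_ ?_ ?_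
  · intro p _
    simp only [mem_filter, mem_univ, true_and]
    exact (p.1.1.orderEmbOfFin _).injective.comp p.2.injective
  · intro p hp q hq h
    -- images determine the finsets
    have himg : ∀ (r : {s // s ∈ powersetCard k (univ : Finset (Fin M))})
        (σ : Equiv.Perm (Fin k)),
        Finset.image ((r.1.orderEmbOfFin (mem_powersetCard.mp r.2).2) ∘ ⇑σ) univ = r.1 := by
      intro r σ
      have : Finset.image ((r.1.orderEmbOfFin (mem_powersetCard.mp r.2).2) ∘ ⇑σ) univ
          = Finset.image (r.1.orderEmbOfFin (mem_powersetCard.mp r.2).2) univ := by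
        rw [← Finset.image_image]
        congr 1
        exact Finset.image_univ_equiv σ
      rw [this]
      apply Finset.coe_injective
      rw [Finset.coe_image, Finset.coe_univ, Set.image_univ, Finset.range_orderEmbOfFin]
    obtain ⟨⟨s, hs⟩, σ⟩ := p
    obtain ⟨⟨s', hs'⟩, σ'⟩ := q
    have h' : (⇑(s.orderEmbOfFin (mem_powersetCard.mp hs).2) ∘ ⇑σ)
        = (⇑(s'.orderEmbOfFin (mem_powersetCard.mp hs').2) ∘ ⇑σ') := h
    have hset : s = s' := by
      have h1 := himg ⟨s, hs⟩ σ
      have h2 := himg ⟨s', hs'⟩ σ'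
      simp only at h1 h2
      rw [← h1, ← h2, h']
    subst hset
    have hσ : σ = σ' := Equiv.ext fun i =>
      (s.orderEmbOfFin (mem_powersetCard.mp hs).2).injective (congrFun h' i)
    simp [hσ]
  · intro f hf
    have hfi : Function.Injective f := (mem_filter.mp hf).2
    set s : Finset (Fin M) := Finset.image f univ with hsdef
    have hcard : s.card = k := by
      rw [hsdef, Finset.card_image_of_injective _ hfi, Finset.card_univ, Fintype.card_fin]
    have hmem : s ∈ powersetCard k (univ : Finset (Fin M)) :=
      mem_powersetCard.mpr ⟨Finset.subset_univ _, hcard⟩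
    have hmemf : ∀ i, f i ∈ s := fun i => Finset.mem_image_of_mem f (mem_univ i)
    set σ' : Fin k → Fin k := fun i => (s.orderIsoOfFin hcard).symm ⟨f i, hmemf i⟩ with hσ'
    have hσinj : Function.Injective σ' := by
      intro a b hab
      apply hfi
      have := congrArg (fun x => ((s.orderIsoOfFin hcard) x : Fin M)) hab
      simpa [hσ'] using this
    refine ⟨⟨⟨s, hmem⟩, Equiv.ofBijective σ' (Finite.injective_iff_bijective.mp hσinj)⟩,
      Finset.mem_product.mpr ⟨Finset.mem_attach _ _, mem_univ _⟩, ?_⟩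
    funext i
    show s.orderEmbOfFin _ (σ' i) = f i
    rw [← Finset.coe_orderIsoOfFin_apply]
    simp [hσ']
  · intro p _
    rfl

open Finset

set_option maxHeartbeats 1000000 in
/-- If `B` is a `k × M` real matrix (`k ≤ M`) with orthonormal rows
(`B * Bᵀ = 1`), then some `k × k` submatrix `U` of `B` (obtained by selecting `k`
columns) satisfies `|det U| ≥ (k! / M^k)^{1/2}`. -/
theorem orthonormal_rows_submatrix_det_lower_bound
    (k M : ℕ) (hkM : k ≤ M) (B : Matrix (Fin k) (Fin M) ℝ)
    (hB : B * B.transpose = 1) :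
    ∃ f : Fin k → Fin M, Function.Injective f ∧
      Real.sqrt ((Nat.factorial k : ℝ) / (M : ℝ) ^ k) ≤ |(B.submatrix id f).det| := by
  classical
  set F : (Fin k → Fin M) → ℝ :=
    fun f => (∏ i, B i (f i)) * (B.submatrix id f).det with hF
  have vanish : ∀ f ∈ (univ : Finset (Fin k → Fin M)), F f ≠ 0 → Function.Injective f := by
    intro f _ hne
    by_contra hni
    apply hne
    rw [Function.not_injective_iff] at hni
    obtain ⟨a, b, hab, hne'⟩ := hni
    have : (B.submatrix id f).det = 0 :=
      Matrix.det_zero_of_column_eq hne' (fun r => by simp [Matrix.submatrix_apply, hab])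
    simp [hF, this]
  have key : ∑ s ∈ (powersetCard k (univ : Finset (Fin M))).attach,
      (B.submatrix id ((s.1).orderEmbOfFin (mem_powersetCard.mp s.2).2)).det ^ 2 = 1 := by
    calc ∑ s ∈ (powersetCard k (univ : Finset (Fin M))).attach,
        (B.submatrix id ((s.1).orderEmbOfFin (mem_powersetCard.mp s.2).2)).det ^ 2
        = ∑ s ∈ (powersetCard k (univ : Finset (Fin M))).attach,
            ∑ σ : Equiv.Perm (Fin k),
              F (((s.1).orderEmbOfFin (mem_powersetCard.mp s.2).2) ∘ ⇑σ) :=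
          Finset.sum_congr rfl fun s _ => (sum_perm_square k M B _).symm
      _ = ∑ f ∈ (univ : Finset (Fin k → Fin M)).filter (fun f => Function.Injective f), F f :=
          sum_inj_regroup k M F
      _ = ∑ f : Fin k → Fin M, F f := Finset.sum_filter_of_ne vanish
      _ = (B * B.transpose).det := (det_mul_transpose_expand k M B).symm
      _ = 1 := by rw [hB, Matrix.det_one]
  set C : ℕ := M.choose k with hC
  have hCpos : 0 < C := Nat.choose_pos hkM
  have hcardatt : ((powersetCard k (univ : Finset (Fin M))).attach).card = C := by
    rw [Finset.card_attach, Finset.card_powersetCard, Finset.card_univ, Fintype.card_fin]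
  have hne : ((powersetCard k (univ : Finset (Fin M))).attach).Nonempty := by
    rw [← Finset.card_pos, hcardatt]; exact hCpos
  have hsum_le : ∑ _s ∈ (powersetCard k (univ : Finset (Fin M))).attach, (1 / (C : ℝ)) ≤
      ∑ s ∈ (powersetCard k (univ : Finset (Fin M))).attach,
        (B.submatrix id ((s.1).orderEmbOfFin (mem_powersetCard.mp s.2).2)).det ^ 2 := by
    rw [key, Finset.sum_const, hcardatt, nsmul_eq_mul]
    rw [mul_one_div, div_self (by exact_mod_cast hCpos.ne')]
  obtain ⟨s, _, hs⟩ := Finset.exists_le_of_sum_le hne hsum_le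
  refine ⟨(s.1).orderEmbOfFin (mem_powersetCard.mp s.2).2,
    ((s.1).orderEmbOfFin (mem_powersetCard.mp s.2).2).injective, ?_⟩
  have hMk : (0 : ℝ) < (M : ℝ) ^ k := by
    rcases Nat.eq_zero_or_pos M with h | h
    · have : k = 0 := by omega
      subst this; simp
    · positivity
  have hfrac : (Nat.factorial k : ℝ) / (M : ℝ) ^ k ≤ 1 / (C : ℝ) := by
    rw [div_le_div_iff₀ hMk (by exact_mod_cast hCpos)]
    have h1 : Nat.factorial k * C ≤ M ^ k := by
      rw [hC, ← Nat.descFactorial_eq_factorial_mul_choose]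
      exact Nat.descFactorial_le_pow M k
    calc (Nat.factorial k : ℝ) * (C : ℝ) = ((Nat.factorial k * C : ℕ) : ℝ) := by push_cast; ring
      _ ≤ ((M ^ k : ℕ) : ℝ) := by exact_mod_cast h1
      _ = 1 * (M : ℝ) ^ k := by push_cast; ring
  calc Real.sqrt ((Nat.factorial k : ℝ) / (M : ℝ) ^ k)
      ≤ Real.sqrt ((B.submatrix id ((s.1).orderEmbOfFin (mem_powersetCard.mp s.2).2)).det ^ 2) :=
        Real.sqrt_le_sqrt (hfrac.trans hs)
    _ = |(B.submatrix id ((s.1).orderEmbOfFin (mem_powersetCard.mp s.2).2)).det| :=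
        Real.sqrt_sq_eq_abs _
end

section
/- Let B be a k×M real matrix (k ≤ M) such that every entry of B Bᵀ − I_k has absolute value at most 1/(3k). Then B has a k×k submatrix U (obtained by selecting k columns) such that |det U| ≥ (1/3) · (k! / M^k)^{1/2}. -/
open Matrix Finset

lemma exp_factor_le {x : ℝ} (hx : |x| ≤ 1/3) : Real.exp (x - x^2) ≤ 1 + x := by
  rw [abs_le] at hx
  rcases le_or_gt 0 x with h0 | h0
  · have h2 : (1 - (x - x^2)) * Real.exp (x - x^2) ≤ 1 := by
      have h := Real.add_one_le_exp (-(x - x^2))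
      rw [Real.exp_neg] at h
      have hp := Real.exp_pos (x - x^2)
      calc (1 - (x - x^2)) * Real.exp (x - x^2)
          ≤ (Real.exp (x - x^2))⁻¹ * Real.exp (x - x^2) := by
            apply mul_le_mul_of_nonneg_right (by linarith) hp.le
        _ = 1 := inv_mul_cancel₀ hp.ne'
    nlinarith [Real.exp_pos (x - x^2), h2, sq_nonneg x]
  · have hs : (0:ℝ) ≤ -x + x^2 := by nlinarith
    have hq := Real.quadratic_le_exp_of_nonneg hs
    have h2 : 1 ≤ (1 + x) * Real.exp (-x + x^2) := by nlinarith [sq_nonneg x, sq_nonneg (x + x^2)]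
    have hp := Real.exp_pos (-x + x^2)
    have h3 : Real.exp (x - x^2) = (Real.exp (-x + x^2))⁻¹ := by
      rw [← Real.exp_neg]; ring_nf
    rw [h3, inv_le_iff_one_le_mul₀ hp]
    linarith [h2]

lemma det_BBt_lower {k M : ℕ} (B : Matrix (Fin k) (Fin M) ℝ)
    (hB : ∀ i j : Fin k,
      |(B * B.transpose - (1 : Matrix (Fin k) (Fin k) ℝ)) i j| ≤ 1 / (3 * (k : ℝ))) :
    (1/9 : ℝ) ≤ (B * Bᵀ).det := by
  rcases Nat.eq_zero_or_pos k with hk | hk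
  · subst hk
    rw [Matrix.det_isEmpty]
    norm_num
  have hk0 : ((k : ℝ)) ≠ 0 := by positivity
  set δ : ℝ := 1 / (3 * (k : ℝ)) with hδ
  have hδ0 : 0 ≤ δ := by positivity
  set A := B * Bᵀ with hAdef
  have hH : A.IsHermitian := by
    have : Bᵀ = Bᴴ := by
      ext i j
      simp [Matrix.conjTranspose_apply]
    rw [hAdef, this]
    exact Matrix.isHermitian_mul_conjTranspose_self B
  set μ := hH.eigenvalues with hμ
  -- spectral computations for traces
  set U : Matrix (Fin k) (Fin k) ℝ := (hH.eigenvectorUnitary : Matrix (Fin k) (Fin k) ℝ) with hU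
  have hdiag : (RCLike.ofReal ∘ μ : Fin k → ℝ) = μ := by
    funext i
    simp
  have hspec : A = U * Matrix.diagonal μ * star U := by
    have := hH.spectral_theorem
    rw [hdiag] at this
    exact this
  have hUU : star U * U = 1 := by
    rw [hU]
    exact Unitary.coe_star_mul_self hH.eigenvectorUnitary
  have htr : A.trace = ∑ i, μ i := by
    rw [hspec, Matrix.trace_mul_cycle, hUU, Matrix.one_mul, Matrix.trace_diagonal]
  have htr2 : (A * A).trace = ∑ i, μ i ^ 2 := by
    have hAA : A * A = U * Matrix.diagonal (fun i => μ i * μ i) * star U := by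
      rw [hspec]
      calc (U * Matrix.diagonal μ * star U) * (U * Matrix.diagonal μ * star U)
          = U * Matrix.diagonal μ * (star U * U) * Matrix.diagonal μ * star U := by
            noncomm_ring
        _ = U * (Matrix.diagonal μ * Matrix.diagonal μ) * star U := by
            rw [hUU]; noncomm_ring
        _ = U * Matrix.diagonal (fun i => μ i * μ i) * star U := by
            rw [Matrix.diagonal_mul_diagonal]
    rw [hAA, Matrix.trace_mul_cycle, hUU, Matrix.one_mul, Matrix.trace_diagonal]
    refine Finset.sum_congr rfl fun i _ => ?_
    simp [sq]
  -- entry bound on E = A - 1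
  have hE : ∀ i j : Fin k, |(A - 1) i j| ≤ δ := hB
  -- sum of eigenvalue shifts
  have hsum_diag : ∑ i, (μ i - 1) = ∑ i, (A - 1) i i := by
    have h1 : ∑ i, (μ i - 1) = (∑ i, μ i) - k := by
      rw [Finset.sum_sub_distrib, Finset.sum_const, Finset.card_univ, Fintype.card_fin,
        nsmul_eq_mul, mul_one]
    have h2 : ∑ i, (A - 1) i i = (∑ i, A i i) - k := by
      have : ∀ i : Fin k, (A - 1) i i = A i i - 1 := by
        intro i
        simp [Matrix.sub_apply, Matrix.one_apply_eq]
      rw [Finset.sum_congr rfl fun i _ => this i, Finset.sum_sub_distrib, Finset.sum_const,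
        Finset.card_univ, Fintype.card_fin, nsmul_eq_mul, mul_one]
    rw [h1, h2, ← htr]
    rfl
  have hS : -(1/3 : ℝ) ≤ ∑ i, (μ i - 1) := by
    rw [hsum_diag]
    have h1 : ∀ i : Fin k, -δ ≤ (A - 1) i i := fun i => neg_le_of_abs_le (hE i i)
    have h2 : (k : ℝ) * (-δ) ≤ ∑ i, (A - 1) i i := by
      calc (k : ℝ) * (-δ) = ∑ _i : Fin k, (-δ) := by
            rw [Finset.sum_const, Finset.card_univ, Fintype.card_fin, nsmul_eq_mul]
        _ ≤ ∑ i, (A - 1) i i := Finset.sum_le_sum fun i _ => h1 i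
    have h3 : (k : ℝ) * (-δ) = -(1/3) := by
      rw [hδ]
      field_simp
    linarith [h2, h3.symm.le]
  -- sum of squares of eigenvalue shifts
  have htrE2 : Matrix.trace ((A - 1) * (A - 1)) = ∑ i, (μ i - 1)^2 := by
    have hexp : (A - 1) * (A - 1) = A * A - A - A + 1 := by
      noncomm_ring
    rw [hexp]
    have : Matrix.trace (A * A - A - A + (1 : Matrix (Fin k) (Fin k) ℝ))
        = (A * A).trace - A.trace - A.trace + (k : ℝ) := by
      rw [Matrix.trace_add, Matrix.trace_sub, Matrix.trace_sub, Matrix.trace_one]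
      simp [Fintype.card_fin]
    rw [this, htr, htr2]
    have hexpand : ∑ i, (μ i - 1)^2 = ∑ i, μ i ^ 2 - 2 * ∑ i, μ i + (k : ℝ) := by
      rw [show ∑ i, (μ i - 1)^2 = ∑ i, (μ i ^2 - 2 * μ i + 1) from
        Finset.sum_congr rfl fun i _ => by ring]
      rw [Finset.sum_add_distrib, Finset.sum_sub_distrib, ← Finset.mul_sum, Finset.sum_const,
        Finset.card_univ, Fintype.card_fin, nsmul_eq_mul, mul_one]
    rw [hexpand]
    ring
  have hQ : ∑ i, (μ i - 1)^2 ≤ 1/9 := by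
    rw [← htrE2]
    have h1 : Matrix.trace ((A - 1) * (A - 1)) = ∑ i, ∑ j, (A - 1) i j * (A - 1) j i := by
      simp [Matrix.trace, Matrix.diag, Matrix.mul_apply]
    rw [h1]
    have h2 : ∀ i j : Fin k, (A - 1) i j * (A - 1) j i ≤ δ * δ := by
      intro i j
      calc (A - 1) i j * (A - 1) j i ≤ |(A - 1) i j * (A - 1) j i| := le_abs_self _
        _ = |(A - 1) i j| * |(A - 1) j i| := abs_mul _ _
        _ ≤ δ * δ := mul_le_mul (hE i j) (hE j i) (abs_nonneg _) hδ0
    calc ∑ i, ∑ j, (A - 1) i j * (A - 1) j i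
        ≤ ∑ _i : Fin k, ∑ _j : Fin k, δ * δ :=
          Finset.sum_le_sum fun i _ => Finset.sum_le_sum fun j _ => h2 i j
      _ = (k : ℝ) * ((k:ℝ) * (δ * δ)) := by
          rw [Finset.sum_const, Finset.sum_const, Finset.card_univ, Fintype.card_fin,
            nsmul_eq_mul, nsmul_eq_mul]
      _ = 1/9 := by
          rw [hδ]
          field_simp
          ring
  have habs : ∀ i : Fin k, |μ i - 1| ≤ 1/3 := by
    intro i
    have h1 : (μ i - 1)^2 ≤ 1/9 := by
      refine le_trans ?_ hQ
      exact Finset.single_le_sum (fun j _ => sq_nonneg (μ j - 1)) (Finset.mem_univ i)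
    rw [abs_le]
    constructor <;> nlinarith
  -- final chain
  have hdet : A.det = ∏ i, μ i := by
    have := hH.det_eq_prod_eigenvalues
    simpa using this
  calc (1/9 : ℝ) ≤ Real.exp (-(4/9)) := by
        have := Real.add_one_le_exp (-(4/9) : ℝ)
        linarith
    _ ≤ Real.exp (∑ i, ((μ i - 1) - (μ i - 1)^2)) := by
        apply Real.exp_le_exp.2
        rw [Finset.sum_sub_distrib]
        linarith [hS, hQ]
    _ = ∏ i, Real.exp ((μ i - 1) - (μ i - 1)^2) := Real.exp_sum _ _
    _ ≤ ∏ i, μ i := by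
        apply Finset.prod_le_prod (fun i _ => (Real.exp_pos _).le)
        intro i _
        have := exp_factor_le (habs i)
        calc Real.exp ((μ i - 1) - (μ i - 1)^2) ≤ 1 + (μ i - 1) := this
          _ = μ i := by ring
    _ = A.det := hdet.symm


lemma det_mul_expand {k M : ℕ} (B : Matrix (Fin k) (Fin M) ℝ) (C : Matrix (Fin M) (Fin k) ℝ) :
    (B * C).det = ∑ f : Fin k → Fin M, (∏ i, B i (f i)) * (C.submatrix f id).det := by
  have e : (B * C) = (fun i => ∑ l, B i l • C l) := by
    funext i j
    simp [Matrix.mul_apply]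
  have h1 : (B * C).det
      = (Matrix.detRowAlternating : (Fin k → ℝ) [⋀^Fin k]→ₗ[ℝ] ℝ).toMultilinearMap
          (fun i => ∑ l, B i l • C l) := by
    rw [show (B * C).det
        = (Matrix.detRowAlternating : (Fin k → ℝ) [⋀^Fin k]→ₗ[ℝ] ℝ).toMultilinearMap (B * C)
        from rfl, e]
  rw [h1, MultilinearMap.map_sum]
  refine Finset.sum_congr rfl fun f _ => ?_
  have h2 := (Matrix.detRowAlternating : (Fin k → ℝ) [⋀^Fin k]→ₗ[ℝ] ℝ).toMultilinearMap.map_smul_univ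
      (fun i => B i (f i)) (fun i => C (f i))
  rw [h2, smul_eq_mul]
  congr 1

lemma sum_det_sq {k M : ℕ} (B : Matrix (Fin k) (Fin M) ℝ) :
    ∑ f : Fin k → Fin M, (B.submatrix id f).det ^ 2
      = (Nat.factorial k : ℝ) * (B * Bᵀ).det := by
  have hBBt : (B * Bᵀ).det
      = ∑ f : Fin k → Fin M, (∏ i, B i (f i)) * (B.submatrix id f).det := by
    rw [det_mul_expand B Bᵀ]
    refine Finset.sum_congr rfl fun f _ => ?_
    congr 1
    rw [← Matrix.det_transpose (B.submatrix id f), Matrix.transpose_submatrix]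
  have key : ∀ σ : Equiv.Perm (Fin k),
      ∑ f : Fin k → Fin M, (∏ i, B (σ i) (f i)) * (B.submatrix id f).det
      = ((Equiv.Perm.sign σ : ℤ) : ℝ)
          * ∑ f : Fin k → Fin M, (∏ i, B i (f i)) * (B.submatrix id f).det := by
    intro σ
    rw [Finset.mul_sum]
    rw [← Equiv.sum_comp (Equiv.arrowCongr σ.symm (Equiv.refl (Fin M)))
        (fun f => (∏ i, B (σ i) (f i)) * (B.submatrix id f).det)]
    refine Finset.sum_congr rfl fun f _ => ?_
    have e1 : ∀ i, (Equiv.arrowCongr σ.symm (Equiv.refl (Fin M))) f i = f (σ i) := by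
      intro i; simp [Equiv.arrowCongr]
    have e2 : (∏ i, B (σ i) ((Equiv.arrowCongr σ.symm (Equiv.refl (Fin M))) f i))
        = ∏ i, B i (f i) := by
      simp only [e1]
      exact Equiv.prod_comp σ (fun j => B j (f j))
    have e3 : B.submatrix id ((Equiv.arrowCongr σ.symm (Equiv.refl (Fin M))) f)
        = (B.submatrix id f).submatrix id σ := by
      ext i j
      simp [e1]
    rw [e2, e3, Matrix.det_permute' σ (B.submatrix id f)]
    push_cast
    ring
  calc ∑ f : Fin k → Fin M, (B.submatrix id f).det ^ 2
      = ∑ f : Fin k → Fin M,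
          ∑ σ : Equiv.Perm (Fin k),
            ((Equiv.Perm.sign σ : ℤ) : ℝ) * ((∏ i, B (σ i) (f i)) * (B.submatrix id f).det) := by
        refine Finset.sum_congr rfl fun f _ => ?_
        rw [sq]
        nth_rewrite 1 [show (B.submatrix id f).det
          = ∑ σ : Equiv.Perm (Fin k),
              Equiv.Perm.sign σ • ∏ i, (B.submatrix id f) (σ i) i from Matrix.det_apply _]
        rw [Finset.sum_mul]
        refine Finset.sum_congr rfl fun σ _ => ?_
        simp only [Matrix.submatrix_apply, id_eq]
        rw [Units.smul_def, zsmul_eq_mul]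
        push_cast
        ring
    _ = ∑ σ : Equiv.Perm (Fin k), ((Equiv.Perm.sign σ : ℤ) : ℝ)
          * ∑ f : Fin k → Fin M, (∏ i, B (σ i) (f i)) * (B.submatrix id f).det := by
        rw [Finset.sum_comm]
        refine Finset.sum_congr rfl fun σ _ => ?_
        rw [Finset.mul_sum]
    _ = ∑ σ : Equiv.Perm (Fin k), ((Equiv.Perm.sign σ : ℤ) : ℝ) * (((Equiv.Perm.sign σ : ℤ) : ℝ)
          * ∑ f : Fin k → Fin M, (∏ i, B i (f i)) * (B.submatrix id f).det) := by
        refine Finset.sum_congr rfl fun σ _ => ?_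
        rw [key σ]
    _ = ∑ σ : Equiv.Perm (Fin k),
          (∑ f : Fin k → Fin M, (∏ i, B i (f i)) * (B.submatrix id f).det) := by
        refine Finset.sum_congr rfl fun σ _ => ?_
        have : ((Equiv.Perm.sign σ : ℤ) : ℝ) * ((Equiv.Perm.sign σ : ℤ) : ℝ) = 1 := by
          rcases Int.units_eq_one_or (Equiv.Perm.sign σ) with h | h <;> rw [h] <;> norm_num
        rw [← mul_assoc, this, one_mul]
    _ = (Nat.factorial k : ℝ) * (B * Bᵀ).det := by
        rw [Finset.sum_const, Finset.card_univ, Fintype.card_perm, Fintype.card_fin,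
          nsmul_eq_mul, hBBt]




/-- If `B` is a `k × M` real matrix (`k ≤ M`) such that every entry of
`B * Bᵀ - 1` has absolute value at most `1/(3k)`, then some `k × k` submatrix `U` of `B`
(obtained by selecting `k` columns) satisfies `|det U| ≥ (1/3) · (k! / M^k)^{1/2}`. -/
theorem near_orthonormal_rows_submatrix_det_lower_bound
    (k M : ℕ) (hkM : k ≤ M) (B : Matrix (Fin k) (Fin M) ℝ)
    (hB : ∀ i j : Fin k,
      |(B * B.transpose - (1 : Matrix (Fin k) (Fin k) ℝ)) i j| ≤ 1 / (3 * (k : ℝ))) :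
    ∃ f : Fin k → Fin M, Function.Injective f ∧
      (1 / 3) * Real.sqrt ((Nat.factorial k : ℝ) / (M : ℝ) ^ k) ≤ |(B.submatrix id f).det| := by
  have hdet : (1/9 : ℝ) ≤ (B * Bᵀ).det := det_BBt_lower B hB
  have hsum := sum_det_sq B
  have hne : Nonempty (Fin k → Fin M) := by
    rcases Nat.eq_zero_or_pos M with hM | hM
    · have hk : k = 0 := by omega
      subst hk
      exact ⟨fun i => i.elim0⟩
    · exact ⟨fun _ => ⟨0, hM⟩⟩
  obtain ⟨f, -, hf⟩ := Finset.exists_max_image (Finset.univ : Finset (Fin k → Fin M))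
    (fun g => (B.submatrix id g).det ^ 2) ⟨Classical.arbitrary _, Finset.mem_univ _⟩
  have hfact : (0:ℝ) < (Nat.factorial k : ℝ) := by
    exact_mod_cast Nat.factorial_pos k
  have hMk : (0:ℝ) < (M : ℝ) ^ k := by
    rcases Nat.eq_zero_or_pos k with h | h
    · simp [h]
    · have hM : 0 < M := lt_of_lt_of_le h hkM
      have : (0:ℝ) < (M:ℝ) := by exact_mod_cast hM
      positivity
  have h1 : (Nat.factorial k : ℝ) * (B * Bᵀ).det ≤ (M:ℝ)^k * (B.submatrix id f).det ^ 2 := by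
    rw [← hsum]
    calc ∑ g : Fin k → Fin M, (B.submatrix id g).det ^ 2
        ≤ (Finset.univ : Finset (Fin k → Fin M)).card • (B.submatrix id f).det ^ 2 :=
          Finset.sum_le_card_nsmul _ _ _ (fun g _ => hf g (Finset.mem_univ g))
      _ = (M:ℝ)^k * (B.submatrix id f).det ^ 2 := by
          rw [Finset.card_univ, Fintype.card_fun, Fintype.card_fin, Fintype.card_fin,
            nsmul_eq_mul]
          push_cast
          ring
  have h2 : (1/9 : ℝ) * ((Nat.factorial k : ℝ) / (M:ℝ)^k) ≤ (B.submatrix id f).det ^ 2 := by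
    rw [mul_div_assoc', div_le_iff₀ hMk]
    nlinarith [h1, hdet, hfact]
  have hpos : 0 < (B.submatrix id f).det ^ 2 :=
    lt_of_lt_of_le (mul_pos (by norm_num) (div_pos hfact hMk)) h2
  have hinj : Function.Injective f := by
    intro i j hij
    by_contra hne2
    have h0 : (B.submatrix id f).det = 0 :=
      Matrix.det_zero_of_column_eq hne2 (fun r => by simp [Matrix.submatrix_apply, hij])
    rw [h0] at hpos
    simp at hpos
  refine ⟨f, hinj, ?_⟩
  have h3 : Real.sqrt ((1/9) * ((Nat.factorial k : ℝ)/(M:ℝ)^k)) ≤ |(B.submatrix id f).det| := by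
    rw [← Real.sqrt_sq_eq_abs]
    exact Real.sqrt_le_sqrt h2
  rw [Real.sqrt_mul (by norm_num : (0:ℝ) ≤ 1/9)] at h3
  rw [show Real.sqrt (1/9) = 1/3 by
    rw [show (1/9:ℝ) = (1/3)^2 by norm_num, Real.sqrt_sq (by norm_num : (0:ℝ) ≤ 1/3)]] at h3
  exact h3
end

section
/- Define q̄(ψ) = E[tanh(ψ^{1/2} Z)²] for ψ ≥ 0, where Z is a standard Gaussian random variable. Then for all ψ ≥ 0, the derivative satisfies max{0, 1 − 4ψ} ≤ dq̄/dψ ≤ 1. -/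
/-!
Differentiating under the integral sign, `q̄'(ψ) = E[f(√ψ Z)] / ψ` for `ψ > 0`, where
`f(a) = a tanh a (1 - tanh² a)`. From `a - a³/3 ≤ tanh a ≤ a` for `a ≥ 0` one gets
`0 ≤ f(a) ≤ a²` and `a² - f(a) ≤ 4a⁴/3`; integrating against `E Z² = 1` and `E Z⁴ = 3`
(Gaussian integration by parts) gives `0 ≤ q̄'(ψ) ≤ 1` and `q̄'(ψ) ≥ 1 - 4ψ`.
At `ψ = 0` the same tanh bounds give `|tanh² a - a²| ≤ 2a⁴/3`, hence `|q̄(t) - t| ≤ 2t²`,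
so the one-sided derivative there is `1`.
-/

open MeasureTheory ProbabilityTheory Real NNReal Filter Topology Set Asymptotics

namespace Real

theorem hasDerivAt_tanh (x : ℝ) : HasDerivAt tanh (1 - tanh x ^ 2) x := by
  have h := (hasDerivAt_sinh x).div (hasDerivAt_cosh x) (cosh_pos x).ne'
  rw [show sinh / cosh = tanh from funext fun y => (tanh_eq_sinh_div_cosh y).symm] at h
  refine h.congr_deriv ?_
  rw [tanh_eq_sinh_div_cosh]
  field_simp

@[fun_prop]
theorem continuous_tanh : Continuous tanh :=
  continuous_iff_continuousAt.2 fun x => (hasDerivAt_tanh x).continuousAt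

theorem tanh_nonneg {x : ℝ} (hx : 0 ≤ x) : 0 ≤ tanh x := by
  rw [tanh_eq_sinh_div_cosh]
  exact div_nonneg (sinh_nonneg_iff.2 hx) (cosh_pos x).le

theorem tanh_abs (x : ℝ) : tanh |x| = |tanh x| := by
  rcases le_total 0 x with hx | hx
  · rw [abs_of_nonneg hx, abs_of_nonneg (tanh_nonneg hx)]
  · rw [abs_of_nonpos hx, tanh_neg, abs_of_nonpos (by simpa using tanh_nonneg (neg_nonneg.2 hx))]

theorem tanh_le_self {x : ℝ} (hx : 0 ≤ x) : tanh x ≤ x := by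
  have hmono : Monotone fun y => y - tanh y :=
    monotone_of_hasDerivAt_nonneg (fun y => (hasDerivAt_id y).sub (hasDerivAt_tanh y))
      fun y => by simp [sq_nonneg]
  simpa using hmono hx

theorem tanh_sq_le_sq (x : ℝ) : tanh x ^ 2 ≤ x ^ 2 := by
  rw [← sq_abs x, ← sq_abs (tanh x), ← tanh_abs]
  exact pow_le_pow_left₀ (tanh_nonneg (abs_nonneg x)) (tanh_le_self (abs_nonneg x)) 2

theorem sub_pow_three_div_three_le_tanh {x : ℝ} (hx : 0 ≤ x) : x - x ^ 3 / 3 ≤ tanh x := by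
  have hmono : Monotone fun y => tanh y - y + y ^ 3 / 3 := by
    refine monotone_of_hasDerivAt_nonneg
      (fun y => ((hasDerivAt_tanh y).sub (hasDerivAt_id y)).add
        ((hasDerivAt_pow 3 y).div_const 3))
      fun y => ?_
    norm_num
    nlinarith [tanh_sq_le_sq y]
  linarith [show (0 : ℝ) ≤ tanh x - x + x ^ 3 / 3 by simpa using hmono hx]

theorem sq_sub_tanh_sq_le (x : ℝ) : x ^ 2 - tanh x ^ 2 ≤ 2 / 3 * x ^ 4 := by
  rw [← sq_abs x, ← sq_abs (tanh x), ← tanh_abs, ← Even.pow_abs (by decide : Even 4)]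
  set a := |x|
  have ha : 0 ≤ a := abs_nonneg x
  have hlow := sub_pow_three_div_three_le_tanh ha
  have hup := tanh_le_self ha
  have hnn := tanh_nonneg ha
  calc a ^ 2 - tanh a ^ 2 = (a - tanh a) * (a + tanh a) := by ring
    _ ≤ a ^ 3 / 3 * (2 * a) := by gcongr <;> linarith
    _ = 2 / 3 * a ^ 4 := by ring

end Real

noncomputable def mulTanhSechSq (a : ℝ) : ℝ := a * tanh a * (1 - tanh a ^ 2)

theorem mulTanhSechSq_abs (a : ℝ) : mulTanhSechSq |a| = mulTanhSechSq a := by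
  rcases le_total 0 a with ha | ha
  · rw [abs_of_nonneg ha]
  · rw [abs_of_nonpos ha, mulTanhSechSq, mulTanhSechSq, tanh_neg]; ring

theorem mulTanhSechSq_nonneg (a : ℝ) : 0 ≤ mulTanhSechSq a := by
  rw [← mulTanhSechSq_abs]
  have := tanh_sq_lt_one |a|
  exact mul_nonneg (mul_nonneg (abs_nonneg a) (tanh_nonneg (abs_nonneg a))) (by linarith)

theorem mulTanhSechSq_le_sq (a : ℝ) : mulTanhSechSq a ≤ a ^ 2 := by
  rw [← mulTanhSechSq_abs, ← sq_abs]
  have ha := abs_nonneg a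
  have := tanh_sq_lt_one |a|
  calc mulTanhSechSq |a| ≤ |a| * |a| * 1 := by
        unfold mulTanhSechSq
        gcongr
        · exact tanh_le_self ha
        · linarith [sq_nonneg (tanh |a|)]
    _ = |a| ^ 2 := by ring

theorem sq_sub_mulTanhSechSq_le (a : ℝ) : a ^ 2 - mulTanhSechSq a ≤ 4 / 3 * a ^ 4 := by
  rw [← mulTanhSechSq_abs, ← sq_abs, ← Even.pow_abs (by decide : Even 4)]
  set b := |a|
  have hb : 0 ≤ b := abs_nonneg a
  rcases le_total (3 / 4) (b ^ 2) with hlarge | hsmall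
  · nlinarith [mulTanhSechSq_nonneg b]
  · -- for `b² ≤ 3/4` the bound `b - b³/3 ≤ tanh b` keeps both factors of `mulTanhSechSq` ≥ 0
    have hb1 : b ≤ 1 := by nlinarith
    have hlow : b - b ^ 3 / 3 ≤ tanh b := sub_pow_three_div_three_le_tanh hb
    have hsech : 1 - b ^ 2 ≤ 1 - tanh b ^ 2 := by linarith [tanh_sq_le_sq b]
    have : b * ((b - b ^ 3 / 3) * (1 - b ^ 2)) ≤ mulTanhSechSq b := by
      rw [mulTanhSechSq, mul_assoc]
      gcongr
      · nlinarith
      · nlinarith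
    nlinarith [pow_nonneg hb 6]

@[fun_prop]
theorem continuous_mulTanhSechSq : Continuous mulTanhSechSq := by
  unfold mulTanhSechSq; fun_prop

namespace ProbabilityTheory

variable {μ : ℝ} {v : ℝ≥0}

theorem hasDerivAt_gaussianPDFReal (hv : v ≠ 0) (x : ℝ) :
    HasDerivAt (gaussianPDFReal μ v) (-((x - μ) / v) * gaussianPDFReal μ v x) x := by
  have hexp : HasDerivAt (fun y => -(y - μ) ^ 2 / (2 * v)) (-((x - μ) / v)) x := by
    refine ((((hasDerivAt_id' x).sub_const μ).pow 2).neg.div_const (2 * (v : ℝ))).congr_deriv ?_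
    field_simp
    ring
  refine (((hasDerivAt_exp _).comp x hexp).const_mul (√(2 * π * v))⁻¹).congr_deriv ?_
  simp only [gaussianPDFReal]; ring

theorem integrable_gaussianReal_iff (hv : v ≠ 0) {f : ℝ → ℝ} :
    Integrable f (gaussianReal μ v) ↔ Integrable fun x => gaussianPDFReal μ v x * f x := by
  rw [gaussianReal_of_var_ne_zero μ hv, integrable_withDensity_iff_integrable_smul'
    (measurable_gaussianPDF μ v) (ae_of_all _ fun _ => gaussianPDF_lt_top)]
  simp [toReal_gaussianPDF]

/-- **Gaussian integration by parts** (Stein's lemma). -/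
theorem integral_sub_mul_gaussianReal_eq (hv : v ≠ 0) {f f' : ℝ → ℝ}
    (hf : ∀ x, HasDerivAt f (f' x) x) (hf_int : Integrable f (gaussianReal μ v))
    (hf'_int : Integrable f' (gaussianReal μ v))
    (hmul_int : Integrable (fun x => (x - μ) * f x) (gaussianReal μ v)) :
    ∫ x, (x - μ) * f x ∂gaussianReal μ v = v * ∫ x, f' x ∂gaussianReal μ v := by
  rw [integrable_gaussianReal_iff hv] at hf_int hf'_int hmul_int
  have hderiv : ∀ x, HasDerivAt (fun y => gaussianPDFReal μ v y * f y)
      (gaussianPDFReal μ v x * f' x - (gaussianPDFReal μ v x * ((x - μ) * f x)) / v) x := by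
    intro x
    refine ((hasDerivAt_gaussianPDFReal hv x).mul (hf x)).congr_deriv ?_
    field_simp
    ring
  have hzero := integral_eq_zero_of_hasDerivAt_of_integrable hderiv
    (hf'_int.sub (hmul_int.div_const _)) hf_int
  rw [integral_sub hf'_int (hmul_int.div_const _), integral_div, sub_eq_zero] at hzero
  simp only [integral_gaussianReal_eq_integral_smul hv, smul_eq_mul]
  rw [hzero]
  field_simp

theorem integrable_pow_gaussianReal (n : ℕ) : Integrable (fun x => x ^ n) (gaussianReal μ v) :=
  (memLp_id_gaussianReal n).integrable_norm_pow'.mono'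
    (by fun_prop) (ae_of_all _ fun x => by simp)

theorem integral_pow_add_two_gaussianReal (n : ℕ) :
    ∫ x, x ^ (n + 2) ∂gaussianReal 0 v = (n + 1) * v * ∫ x, x ^ n ∂gaussianReal 0 v := by
  rcases eq_or_ne v 0 with rfl | hv
  · simp
  have hstein := integral_sub_mul_gaussianReal_eq (μ := 0) hv (f := fun x => x ^ (n + 1))
    (fun x => hasDerivAt_pow (n + 1) x) (integrable_pow_gaussianReal _)
    ((integrable_pow_gaussianReal n).const_mul _)
    (by simpa [← pow_succ'] using integrable_pow_gaussianReal (n + 2))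
  simp only [sub_zero, ← pow_succ', Nat.cast_add, Nat.cast_one, add_tsub_cancel_right,
    integral_const_mul] at hstein
  rw [hstein]; ring

theorem integral_sq_gaussianReal_zero_one : ∫ x, x ^ 2 ∂gaussianReal 0 1 = 1 := by
  simpa using integral_pow_add_two_gaussianReal (v := 1) 0

theorem integral_pow_four_gaussianReal_zero_one : ∫ x, x ^ 4 ∂gaussianReal 0 1 = 3 := by
  rw [integral_pow_add_two_gaussianReal 2, integral_sq_gaussianReal_zero_one]; norm_num

end ProbabilityTheory

noncomputable def qbar (t : ℝ) : ℝ := ∫ z, tanh (√t * z) ^ 2 ∂gaussianReal 0 1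

noncomputable def qbarDeriv (t : ℝ) : ℝ :=
  ∫ z, mulTanhSechSq (√t * z) / t ∂gaussianReal 0 1

theorem sq_sqrt_mul {t : ℝ} (ht : 0 ≤ t) (z : ℝ) : (√t * z) ^ 2 = t * z ^ 2 := by
  rw [mul_pow, sq_sqrt ht]

theorem hasDerivAt_tanh_sq_sqrt_mul {t : ℝ} (ht : 0 < t) (z : ℝ) :
    HasDerivAt (fun s => tanh (√s * z) ^ 2) (mulTanhSechSq (√t * z) / t) t := by
  have hsqrt := (hasDerivAt_sqrt ht.ne').mul_const z
  refine (((hasDerivAt_tanh _).comp t hsqrt).pow 2).congr_deriv ?_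
  have hsqrt_ne : √t ≠ 0 := (sqrt_pos.2 ht).ne'
  rw [mulTanhSechSq, Function.comp_apply]
  field_simp
  rw [sq_sqrt ht.le]
  ring

theorem mulTanhSechSq_sqrt_mul_div_le {t : ℝ} (ht : 0 < t) (z : ℝ) :
    mulTanhSechSq (√t * z) / t ≤ z ^ 2 := by
  rw [div_le_iff₀ ht, mul_comm (z ^ 2), ← sq_sqrt_mul ht.le]
  exact mulTanhSechSq_le_sq _

theorem sq_sub_mulTanhSechSq_sqrt_mul_div_le {t : ℝ} (ht : 0 < t) (z : ℝ) :
    z ^ 2 - mulTanhSechSq (√t * z) / t ≤ 4 / 3 * t * z ^ 4 := by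
  have h := sq_sub_mulTanhSechSq_le (√t * z)
  rw [show (√t * z) ^ 4 = ((√t * z) ^ 2) ^ 2 by ring, sq_sqrt_mul ht.le] at h
  rw [sub_le_iff_le_add, ← sub_le_iff_le_add', le_div_iff₀ ht]
  nlinarith

theorem integrable_tanh_sq_mul (c : ℝ) :
    Integrable (fun z => tanh (c * z) ^ 2) (gaussianReal 0 1) :=
  (integrable_const 1).mono' (by fun_prop) (ae_of_all _ fun z => by
    rw [norm_of_nonneg (sq_nonneg _)]; exact (tanh_sq_lt_one _).le)

theorem integrable_mulTanhSechSq_sqrt_mul_div {t : ℝ} (ht : 0 < t) :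
    Integrable (fun z => mulTanhSechSq (√t * z) / t) (gaussianReal 0 1) :=
  (integrable_pow_gaussianReal 2).mono' (by fun_prop) (ae_of_all _ fun z => by
    rw [norm_of_nonneg (div_nonneg (mulTanhSechSq_nonneg _) ht.le)]
    exact mulTanhSechSq_sqrt_mul_div_le ht z)

theorem hasDerivAt_qbar {ψ : ℝ} (hψ : 0 < ψ) : HasDerivAt qbar (qbarDeriv ψ) ψ := by
  have hball : ∀ t ∈ Metric.ball ψ ψ, 0 < t := fun t ht => by
    rw [Metric.mem_ball, Real.dist_eq, abs_lt] at ht; linarith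
  refine (hasDerivAt_integral_of_dominated_loc_of_deriv_le (Metric.ball_mem_nhds ψ hψ)
    (Eventually.of_forall fun t => (integrable_tanh_sq_mul _).aestronglyMeasurable)
    (integrable_tanh_sq_mul _) (integrable_mulTanhSechSq_sqrt_mul_div hψ).aestronglyMeasurable
    (ae_of_all _ fun z t ht => ?_) (integrable_pow_gaussianReal 2)
    (ae_of_all _ fun z t ht => hasDerivAt_tanh_sq_sqrt_mul (hball t ht) z)).2
  rw [norm_of_nonneg (div_nonneg (mulTanhSechSq_nonneg _) (hball t ht).le)]
  exact mulTanhSechSq_sqrt_mul_div_le (hball t ht) z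

theorem qbarDeriv_nonneg {t : ℝ} (ht : 0 ≤ t) : 0 ≤ qbarDeriv t :=
  integral_nonneg fun _ => div_nonneg (mulTanhSechSq_nonneg _) ht

theorem qbarDeriv_le_one {t : ℝ} (ht : 0 < t) : qbarDeriv t ≤ 1 := by
  rw [← integral_sq_gaussianReal_zero_one]
  exact integral_mono (integrable_mulTanhSechSq_sqrt_mul_div ht) (integrable_pow_gaussianReal 2)
    (mulTanhSechSq_sqrt_mul_div_le ht)

theorem one_sub_four_mul_le_qbarDeriv {t : ℝ} (ht : 0 < t) : 1 - 4 * t ≤ qbarDeriv t := by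
  have h : ∫ z, (z ^ 2 - mulTanhSechSq (√t * z) / t) ∂gaussianReal 0 1 ≤
      ∫ z, 4 / 3 * t * z ^ 4 ∂gaussianReal 0 1 :=
    integral_mono
      ((integrable_pow_gaussianReal 2).sub (integrable_mulTanhSechSq_sqrt_mul_div ht))
      ((integrable_pow_gaussianReal 4).const_mul (4 / 3 * t))
      (sq_sub_mulTanhSechSq_sqrt_mul_div_le ht)
  rw [integral_sub (integrable_pow_gaussianReal 2) (integrable_mulTanhSechSq_sqrt_mul_div ht),
    integral_const_mul, integral_sq_gaussianReal_zero_one,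
    integral_pow_four_gaussianReal_zero_one] at h
  rw [qbarDeriv]
  linarith

theorem abs_tanh_sq_sqrt_mul_sub_le {t : ℝ} (ht : 0 ≤ t) (z : ℝ) :
    |tanh (√t * z) ^ 2 - t * z ^ 2| ≤ 2 / 3 * t ^ 2 * z ^ 4 := by
  have hlow := sq_sub_tanh_sq_le (√t * z)
  have hup := tanh_sq_le_sq (√t * z)
  rw [show (√t * z) ^ 4 = ((√t * z) ^ 2) ^ 2 by ring, sq_sqrt_mul ht] at hlow
  rw [sq_sqrt_mul ht] at hup
  rw [abs_sub_comm, abs_of_nonneg (by linarith)]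
  linarith

theorem abs_qbar_sub_self_le {t : ℝ} (ht : 0 ≤ t) : |qbar t - t| ≤ 2 * t ^ 2 := by
  have hdiff : qbar t - t = ∫ z, (tanh (√t * z) ^ 2 - t * z ^ 2) ∂gaussianReal 0 1 := by
    rw [integral_sub (integrable_tanh_sq_mul _) ((integrable_pow_gaussianReal 2).const_mul t),
      integral_const_mul, integral_sq_gaussianReal_zero_one, mul_one, qbar]
  calc |qbar t - t| ≤ ∫ z, 2 / 3 * t ^ 2 * z ^ 4 ∂gaussianReal 0 1 := by
        rw [hdiff]
        exact norm_integral_le_of_norm_le ((integrable_pow_gaussianReal 4).const_mul _)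
          (ae_of_all _ fun z => (norm_eq_abs _).trans_le (abs_tanh_sq_sqrt_mul_sub_le ht z))
    _ = 2 * t ^ 2 := by
        rw [integral_const_mul, integral_pow_four_gaussianReal_zero_one]; ring

theorem hasDerivWithinAt_qbar_zero : HasDerivWithinAt qbar 1 (Ici 0) 0 := by
  rw [hasDerivWithinAt_iff_isLittleO]
  have hbigO :
      (fun t => qbar t - qbar 0 - (t - 0) • (1 : ℝ)) =O[𝓝[Ici 0] 0] fun t => t ^ 2 := by
    refine IsBigO.of_bound 2 (eventually_nhdsWithin_of_forall fun t ht => ?_)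
    simpa [qbar, norm_pow] using abs_qbar_sub_self_le ht
  simpa using hbigO.trans_isLittleO ((isLittleO_pow_id one_lt_two).mono nhdsWithin_le_nhds)

/-- With `q̄(ψ) = E[tanh(√ψ Z)²]` for a standard Gaussian `Z`, for every
`ψ ≥ 0` the derivative of `q̄` (taken within `[0,∞)`) satisfies
`max{0, 1 − 4ψ} ≤ q̄'(ψ) ≤ 1`. -/
theorem qbar_deriv_bounds (ψ : ℝ) (hψ : 0 ≤ ψ) :
    ∃ d : ℝ,
      HasDerivWithinAt
        (fun t : ℝ => ∫ z, Real.tanh (Real.sqrt t * z) ^ 2 ∂(gaussianReal 0 1))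
        d (Set.Ici 0) ψ ∧
      max 0 (1 - 4 * ψ) ≤ d ∧ d ≤ 1 := by
  rcases hψ.eq_or_lt with rfl | hpos
  · exact ⟨1, hasDerivWithinAt_qbar_zero, by norm_num, le_rfl⟩
  · exact ⟨qbarDeriv ψ, (hasDerivAt_qbar hpos).hasDerivWithinAt,
      max_le (qbarDeriv_nonneg hpos.le) (one_sub_four_mul_le_qbarDeriv hpos),
      qbarDeriv_le_one hpos⟩
end

section
/- Let U : ℝ → [0,1] be measurable with E[U(ξ)] > 0 for ξ standard Gaussian. Then for every c with 1/2 ≤ c ≤ 2 and every x ∈ ℝ, E_ξ[U(x + cξ)] ≥ E[U(cξ); |cξ| ≤ K(x)] · exp(−(3/2) K(x)²/c²), where K(x) = max{K₀, |x|} for any fixed K₀ ≥ 0. In particular E_ξ[U(x+cξ)] > 0 whenever E[U(cξ); |cξ| ≤ K₀] > 0. -/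
open MeasureTheory ProbabilityTheory
open scoped NNReal ENNReal

lemma gauss_integral_eq (g : ℝ → ℝ) :
    ∫ z, g z ∂(gaussianReal 0 1) = ∫ z, (gaussianPDFReal 0 1 z) * g z := by
  rw [gaussianReal_of_var_ne_zero 0 one_ne_zero]
  have : (gaussianPDF 0 1) = fun z => ((Real.toNNReal (gaussianPDFReal 0 1 z) : ℝ≥0) : ℝ≥0∞) := rfl
  rw [this, integral_withDensity_eq_integral_smul
    ((measurable_gaussianPDFReal 0 1).real_toNNReal) g]
  congr 1; ext z
  simp [NNReal.smul_def, Real.coe_toNNReal _ (gaussianPDFReal_nonneg 0 1 z)]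

lemma gauss_setIntegral_eq (g : ℝ → ℝ) {S : Set ℝ} (hS : MeasurableSet S) :
    ∫ z in S, g z ∂(gaussianReal 0 1) = ∫ z in S, (gaussianPDFReal 0 1 z) * g z := by
  rw [gaussianReal_of_var_ne_zero 0 one_ne_zero, restrict_withDensity hS]
  have : (gaussianPDF 0 1) = fun z => ((Real.toNNReal (gaussianPDFReal 0 1 z) : ℝ≥0) : ℝ≥0∞) := rfl
  rw [this, integral_withDensity_eq_integral_smul
    ((measurable_gaussianPDFReal 0 1).real_toNNReal) g]
  congr 1; ext z
  simp [NNReal.smul_def, Real.coe_toNNReal _ (gaussianPDFReal_nonneg 0 1 z)]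

lemma gauss_pdf_shift (w a : ℝ) :
    gaussianPDFReal 0 1 (w - a) = gaussianPDFReal 0 1 w * Real.exp (a * w - a ^ 2 / 2) := by
  simp only [gaussianPDFReal, NNReal.coe_one, mul_one, sub_zero]
  rw [mul_assoc, ← Real.exp_add]
  ring_nf

/-- For measurable `U : ℝ → [0,1]` with `E[U(ξ)] > 0` (`ξ` standard
Gaussian), for every `1/2 ≤ c ≤ 2`, `x ∈ ℝ`, and fixed `K₀ ≥ 0`, writing
`K(x) = max{K₀,|x|}`:
`E_ξ[U(x+cξ)] ≥ E[U(cξ); |cξ| ≤ K(x)] · exp(−(3/2)K(x)²/c²)`; in particular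
`E_ξ[U(x+cξ)] > 0` whenever `E[U(cξ); |cξ| ≤ K₀] > 0`. -/
theorem gaussian_shift_lower_bound
    (U : ℝ → ℝ) (hmeas : Measurable U) (h0 : ∀ x, 0 ≤ U x) (h1 : ∀ x, U x ≤ 1)
    (hpos : 0 < ∫ z, U z ∂(gaussianReal 0 1))
    (K₀ : ℝ) (hK₀ : 0 ≤ K₀) :
    ∀ c x : ℝ, 1 / 2 ≤ c → c ≤ 2 →
      ((∫ z in {z : ℝ | |c * z| ≤ max K₀ |x|}, U (c * z) ∂(gaussianReal 0 1)) *
          Real.exp (-(3 / 2) * (max K₀ |x|) ^ 2 / c ^ 2)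
        ≤ ∫ z, U (x + c * z) ∂(gaussianReal 0 1)) ∧
      ((0 < ∫ z in {z : ℝ | |c * z| ≤ K₀}, U (c * z) ∂(gaussianReal 0 1)) →
        0 < ∫ z, U (x + c * z) ∂(gaussianReal 0 1)) := by
  intro c x hcl hcu
  have hc : 0 < c := lt_of_lt_of_le (by norm_num) hcl
  set K := max K₀ |x| with hK
  have hKx : |x| ≤ K := le_max_right _ _
  have hK0K : K₀ ≤ K := le_max_left _ _
  set a := x / c with ha
  set E := Real.exp (-(3 / 2) * K ^ 2 / c ^ 2) with hE
  have hEpos : 0 < E := hE ▸ Real.exp_pos _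
  set S : Set ℝ := {z : ℝ | |c * z| ≤ K} with hSdef
  have hSm : MeasurableSet S :=
    measurableSet_le ((measurable_const_mul c).abs) measurable_const
  have harg : ∀ w : ℝ, x + c * (w - a) = c * w := by
    intro w; rw [ha]; field_simp; ring
  have hA : ∫ z, U (x + c * z) ∂(gaussianReal 0 1)
      = ∫ w, gaussianPDFReal 0 1 (w - a) * U (c * w) := by
    calc ∫ z, U (x + c * z) ∂(gaussianReal 0 1)
        = ∫ z, gaussianPDFReal 0 1 z * U (x + c * z) := gauss_integral_eq _
      _ = ∫ w, gaussianPDFReal 0 1 (w - a) * U (x + c * (w - a)) :=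
          (integral_sub_right_eq_self (fun z => gaussianPDFReal 0 1 z * U (x + c * z)) a).symm
      _ = ∫ w, gaussianPDFReal 0 1 (w - a) * U (c * w) := by simp_rw [harg]
  have hB : ∫ z in S, U (c * z) ∂(gaussianReal 0 1)
      = ∫ w in S, gaussianPDFReal 0 1 w * U (c * w) :=
    gauss_setIntegral_eq _ hSm
  have hpint : Integrable (gaussianPDFReal 0 1) := integrable_gaussianPDFReal 0 1
  have hpaint : Integrable (fun w => gaussianPDFReal 0 1 (w - a)) := hpint.comp_sub_right a
  have hmf : Measurable fun w => gaussianPDFReal 0 1 (w - a) * U (c * w) :=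
    ((measurable_gaussianPDFReal 0 1).comp (measurable_id.sub measurable_const)).mul
      (hmeas.comp (measurable_const_mul c))
  have I1 : Integrable (fun w => gaussianPDFReal 0 1 (w - a) * U (c * w)) := by
    refine hpaint.mono' hmf.aestronglyMeasurable (ae_of_all _ fun w => ?_)
    rw [Real.norm_eq_abs, abs_mul, abs_of_nonneg (gaussianPDFReal_nonneg _ _ _),
      abs_of_nonneg (h0 _)]
    exact mul_le_of_le_one_right (gaussianPDFReal_nonneg _ _ _) (h1 _)
  have I2 : IntegrableOn (fun w => gaussianPDFReal 0 1 w * U (c * w) * E) S := by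
    refine Integrable.integrableOn ?_
    refine (hpint.mul_const E).mono'
      (((measurable_gaussianPDFReal 0 1).mul
        (hmeas.comp (measurable_const_mul c))).mul_const E).aestronglyMeasurable
      (ae_of_all _ fun w => ?_)
    have h0p := gaussianPDFReal_nonneg 0 1 w
    have h0u := h0 (c * w); have h1u := h1 (c * w)
    rw [Real.norm_eq_abs, abs_of_nonneg (by positivity)]
    nlinarith [mul_nonneg h0p hEpos.le]
  have hpt : ∀ w ∈ S,
      gaussianPDFReal 0 1 w * U (c * w) * E ≤ gaussianPDFReal 0 1 (w - a) * U (c * w) := by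
    intro w hw
    have hwS : |c * w| ≤ K := hw
    have hwt : |w| ≤ K / c := by
      rw [abs_mul, abs_of_pos hc] at hwS
      rw [le_div_iff₀ hc]; linarith
    have hat : |a| ≤ K / c := by
      rw [ha, abs_div, abs_of_pos hc]
      exact div_le_div_of_nonneg_right hKx hc.le
    set t := K / c with ht
    have htnn : 0 ≤ t := le_trans (abs_nonneg a) hat
    have haw : -(t * t) ≤ a * w := by
      have h1' : |a * w| ≤ t * t := by
        rw [abs_mul]
        exact mul_le_mul hat hwt (abs_nonneg w) htnn
      linarith [neg_abs_le (a * w)]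
    have ha2 : a ^ 2 ≤ t ^ 2 := by
      rw [← sq_abs a]
      exact pow_le_pow_left₀ (abs_nonneg a) hat 2
    have hkey : -(3 / 2) * K ^ 2 / c ^ 2 ≤ a * w - a ^ 2 / 2 := by
      have h2 : K ^ 2 / c ^ 2 = t ^ 2 := by rw [ht, div_pow]
      have h3 : -(3 / 2) * K ^ 2 / c ^ 2 = -(3 / 2) * t ^ 2 := by
        rw [mul_div_assoc, h2]
      rw [h3]
      nlinarith
    have hEle : E ≤ Real.exp (a * w - a ^ 2 / 2) := by
      rw [hE]; exact Real.exp_le_exp.mpr hkey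
    rw [gauss_pdf_shift w a]
    have hpU : 0 ≤ gaussianPDFReal 0 1 w * U (c * w) :=
      mul_nonneg (gaussianPDFReal_nonneg _ _ _) (h0 _)
    nlinarith
  have main : (∫ z in S, U (c * z) ∂(gaussianReal 0 1)) * E
      ≤ ∫ z, U (x + c * z) ∂(gaussianReal 0 1) := by
    rw [hA, hB, ← integral_mul_const]
    calc ∫ w in S, gaussianPDFReal 0 1 w * U (c * w) * E
        ≤ ∫ w in S, gaussianPDFReal 0 1 (w - a) * U (c * w) :=
          setIntegral_mono_on I2 I1.integrableOn hSm hpt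
      _ ≤ ∫ w, gaussianPDFReal 0 1 (w - a) * U (c * w) :=
          setIntegral_le_integral I1 (ae_of_all _ fun w =>
            mul_nonneg (gaussianPDFReal_nonneg _ _ _) (h0 _))
  refine ⟨main, fun hposB => ?_⟩
  have hUint : Integrable (fun z => U (c * z)) (gaussianReal 0 1) := by
    refine (integrable_const (1 : ℝ)).mono'
      (hmeas.comp (measurable_const_mul c)).aestronglyMeasurable
      (ae_of_all _ fun z => ?_)
    rw [Real.norm_eq_abs, abs_of_nonneg (h0 _)]
    simpa using h1 (c * z)
  have hsub : {z : ℝ | |c * z| ≤ K₀} ⊆ S := fun z hz => le_trans hz hK0K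
  have hmono : ∫ z in {z : ℝ | |c * z| ≤ K₀}, U (c * z) ∂(gaussianReal 0 1)
      ≤ ∫ z in S, U (c * z) ∂(gaussianReal 0 1) :=
    setIntegral_mono_set hUint.integrableOn (ae_of_all _ fun z => h0 _)
      (HasSubset.Subset.eventuallyLE hsub)
  have hBpos : 0 < ∫ z in S, U (c * z) ∂(gaussianReal 0 1) := lt_of_lt_of_le hposB hmono
  exact lt_of_lt_of_le (mul_pos hBpos hEpos) main
end

section
/- Let U : ℝ → [0,1] be measurable with ∫ U(x+cz)φ(z)dz > 0 for all x,c in the relevant range, and define F_q(x) = (1−q)^{−1/2} · E_ξ[ξ U(x + (1−q)^{1/2}ξ)] / E_ξ[U(x + (1−q)^{1/2}ξ)] for q ∈ [0,1). Suppose that for c = (1−q)^{1/2} and all x ∈ ℝ, the ratio E_{ξ,ξ'}[(ξ−ξ')² U(x+cξ)U(x+cξ')] / E_{ξ,ξ'}[U(x+cξ)U(x+cξ')] is at most K₂. Then F_q is differentiable with ‖F_q'‖_∞ ≤ (1−q)^{−1}(K₂/2 + 1), hence F_q is Lipschitz. -/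
/-!
Write `c = √(1 - q)` and `Mₖ(x) = E[ξᵏ U(x + cξ)]`, so that `F_q = c⁻¹ M₁ / M₀`. The substitution
`t = x + cξ` moves the dependence on `x` from `U` into the Gaussian density, which may be
differentiated under the integral sign; this is Gaussian integration by parts,
`c Mₖ' = Mₖ₊₁ - k Mₖ₋₁`. Hence `F_q' = c⁻² ((M₂M₀ - M₁²)/M₀² - 1)`, and since
`E[(ξ - ξ')² U U'] = 2 (M₂M₀ - M₁²)` and `E[U U'] = M₀²`, the hypothesis puts the ratio
`(M₂M₀ - M₁²)/M₀²` in `[0, K₂/2]`.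
-/

open MeasureTheory ProbabilityTheory Real
open scoped Nat

lemma gaussianPDFReal_zero_one (u : ℝ) :
    gaussianPDFReal 0 1 u = (√(2 * π))⁻¹ * exp (-u ^ 2 / 2) := by
  simp [gaussianPDFReal]

lemma gaussianPDFReal_zero_one_le (u : ℝ) : gaussianPDFReal 0 1 u ≤ exp (-u ^ 2 / 2) := by
  rw [gaussianPDFReal_zero_one]
  refine mul_le_of_le_one_left (exp_nonneg _) (inv_le_one_of_one_le₀ ?_)
  exact one_le_sqrt.2 (by nlinarith [pi_gt_three])

lemma hasDerivAt_gaussianPDFReal_zero_one (u : ℝ) :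
    HasDerivAt (gaussianPDFReal 0 1) (-u * gaussianPDFReal 0 1 u) u := by
  have hquad : HasDerivAt (fun v : ℝ => -v ^ 2 / 2) (-u) u :=
    ((hasDerivAt_pow 2 u).neg.div_const 2).congr_deriv (by push_cast; ring)
  rw [funext gaussianPDFReal_zero_one]
  exact (hquad.exp.const_mul _).congr_deriv (by beta_reduce; ring)

lemma abs_pow_le_mul_exp (k : ℕ) (u : ℝ) : |u| ^ k ≤ (1 + 4 ^ k * k !) * exp (u ^ 2 / 4) := by
  have hexp : 1 ≤ exp (u ^ 2 / 4) := one_le_exp (by positivity)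
  have hsq : (u ^ 2) ^ k ≤ 4 ^ k * k ! * exp (u ^ 2 / 4) := by
    have := pow_div_factorial_le_exp (u ^ 2 / 4) (by positivity) k
    rw [div_pow, div_div, div_le_iff₀ (by positivity)] at this
    linarith
  have hsplit : |u| ^ k ≤ 1 + (u ^ 2) ^ k := by
    rcases le_total |u| 1 with h | h
    · linarith [pow_le_one₀ (n := k) (abs_nonneg u) h, pow_nonneg (sq_nonneg u) k]
    · rw [← sq_abs, ← pow_mul]
      linarith [pow_le_pow_right₀ h (show k ≤ 2 * k by omega)]
  nlinarith

lemma abs_pow_mul_gaussianPDFReal_le (k : ℕ) (u : ℝ) :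
    |u ^ k * gaussianPDFReal 0 1 u| ≤ (1 + 4 ^ k * k !) * exp (-u ^ 2 / 4) := by
  rw [abs_mul, abs_pow, abs_of_nonneg (gaussianPDFReal_nonneg 0 1 u)]
  calc |u| ^ k * gaussianPDFReal 0 1 u
      ≤ (1 + 4 ^ k * k !) * exp (u ^ 2 / 4) * exp (-u ^ 2 / 2) :=
        mul_le_mul (abs_pow_le_mul_exp k u) (gaussianPDFReal_zero_one_le u)
          (gaussianPDFReal_nonneg 0 1 u) (by positivity)
    _ = (1 + 4 ^ k * k !) * exp (-u ^ 2 / 4) := by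
        rw [mul_assoc, ← exp_add]; ring_nf

lemma integrable_of_abs_le_mul_exp {ψ : ℝ → ℝ} {C : ℝ} (hψ : AEStronglyMeasurable ψ)
    (hψC : ∀ u, |ψ u| ≤ C * exp (-u ^ 2 / 4)) : Integrable ψ :=
  ((integrable_exp_neg_mul_sq (b := 1 / 4) (by norm_num)).const_mul C).mono' hψ
    (ae_of_all _ fun u => by rw [norm_eq_abs]; convert hψC u using 3; ring)

lemma integrable_mul_comp_sub {V ψ : ℝ → ℝ} {B C : ℝ} (hV : AEStronglyMeasurable V)
    (hVB : ∀ t, |V t| ≤ B) (hψ : AEStronglyMeasurable ψ)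
    (hψC : ∀ u, |ψ u| ≤ C * exp (-u ^ 2 / 4)) (y : ℝ) :
    Integrable (fun t => V t * ψ (t - y)) :=
  ((integrable_of_abs_le_mul_exp hψ hψC).comp_sub_right y).bdd_mul hV (ae_of_all _ hVB)

lemma exp_neg_sq_sub_le {t y y₀ : ℝ} (h : |y - y₀| ≤ 1) :
    exp (-(t - y) ^ 2 / 4) ≤ exp (1 / 4) * exp (-(1 / 8) * (t - y₀) ^ 2) := by
  rw [← exp_add, exp_le_exp]
  have : (y - y₀) ^ 2 ≤ 1 := by nlinarith [abs_nonneg (y - y₀), sq_abs (y - y₀)]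
  nlinarith [sq_nonneg (t - y - (y - y₀))]

theorem hasDerivAt_integral_mul_comp_sub {V ψ ψ' : ℝ → ℝ} {B C C' : ℝ}
    (hV : AEStronglyMeasurable V) (hVB : ∀ t, |V t| ≤ B)
    (hψ : ∀ u, HasDerivAt ψ (ψ' u) u) (hψC : ∀ u, |ψ u| ≤ C * exp (-u ^ 2 / 4))
    (hψ'C : ∀ u, |ψ' u| ≤ C' * exp (-u ^ 2 / 4)) (y₀ : ℝ) :
    HasDerivAt (fun y => ∫ t, V t * ψ (t - y)) (-∫ t, V t * ψ' (t - y₀)) y₀ := by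
  have hψm : Continuous ψ := continuous_iff_continuousAt.2 fun u => (hψ u).continuousAt
  have hψ'm : Measurable ψ' := by
    simpa only [funext fun u => (hψ u).deriv] using measurable_deriv ψ
  have hB : 0 ≤ B := (abs_nonneg _).trans (hVB 0)
  have hC' : 0 ≤ C' := nonneg_of_mul_nonneg_left ((abs_nonneg _).trans (hψ'C 0)) (exp_pos _)
  have hderiv : ∀ t y, HasDerivAt (fun y => V t * ψ (t - y)) (V t * -ψ' (t - y)) y := fun t y =>
    (((hψ (t - y)).comp y ((hasDerivAt_id y).const_sub t)).const_mul (V t)).congr_deriv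
      (by simp)
  have hbound : ∀ t, ∀ y ∈ Metric.ball y₀ 1,
      ‖V t * -ψ' (t - y)‖ ≤ B * (C' * (exp (1 / 4) * exp (-(1 / 8) * (t - y₀) ^ 2))) := by
    intro t y hy
    rw [norm_eq_abs, abs_mul, abs_neg]
    refine mul_le_mul (hVB t) ((hψ'C _).trans ?_) (abs_nonneg _) hB
    have hy' : |y - y₀| ≤ 1 := (by simpa [← dist_eq] using hy : |y - y₀| < 1).le
    exact mul_le_mul_of_nonneg_left (exp_neg_sq_sub_le hy') hC'
  have key := hasDerivAt_integral_of_dominated_loc_of_deriv_le (Metric.ball_mem_nhds y₀ one_pos)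
    (Filter.Eventually.of_forall fun y =>
      (integrable_mul_comp_sub hV hVB hψm.aestronglyMeasurable hψC y).aestronglyMeasurable)
    (integrable_mul_comp_sub hV hVB hψm.aestronglyMeasurable hψC y₀)
    (hV.mul (hψ'm.comp (measurable_id.sub_const y₀)).neg.aestronglyMeasurable)
    (ae_of_all _ hbound)
    ((((integrable_exp_neg_mul_sq (b := 1 / 8) (by norm_num)).comp_sub_right y₀).const_mul
      (exp (1 / 4))).const_mul C' |>.const_mul B)
    (ae_of_all _ fun t y _ => hderiv t y)
  simpa only [mul_neg, integral_neg] using key.2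

lemma integral_integral_mul {α : Type*} [MeasurableSpace α] {μ ν : Measure α} (f g : α → ℝ) :
    ∫ z, ∫ z', f z * g z' ∂ν ∂μ = (∫ z, f z ∂μ) * ∫ z', g z' ∂ν := by
  simp_rw [integral_const_mul, integral_mul_const]

lemma integral_integral_sub_sq_mul {μ : Measure ℝ} {f : ℝ → ℝ} (h₀ : Integrable f μ)
    (h₁ : Integrable (fun z => z * f z) μ) (h₂ : Integrable (fun z => z ^ 2 * f z) μ) :
    ∫ z, ∫ z', (z - z') ^ 2 * (f z * f z') ∂μ ∂μ =
      2 * ((∫ z, z ^ 2 * f z ∂μ) * (∫ z, f z ∂μ) - (∫ z, z * f z ∂μ) ^ 2) := by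
  have hexpand : ∀ z z', (z - z') ^ 2 * (f z * f z') =
      z ^ 2 * f z * f z' - 2 * (z * f z) * (z' * f z') + f z * (z' ^ 2 * f z') := by
    intros; ring
  have hinner : ∀ z, ∫ z', (z - z') ^ 2 * (f z * f z') ∂μ =
      z ^ 2 * f z * (∫ z', f z' ∂μ) - 2 * (∫ z', z' * f z' ∂μ) * (z * f z) +
        (∫ z', z' ^ 2 * f z' ∂μ) * f z := by
    intro z
    simp_rw [hexpand z]
    rw [integral_add (by fun_prop) (h₂.const_mul _),
      integral_sub (h₀.const_mul _) (h₁.const_mul _), integral_const_mul, integral_const_mul,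
      integral_const_mul]
    ring
  simp_rw [hinner]
  rw [integral_add (by fun_prop) (h₀.const_mul _),
    integral_sub (h₂.mul_const _) (h₁.const_mul _), integral_mul_const, integral_const_mul,
    integral_const_mul]
  ring

lemma lipschitzWith_of_forall_hasDerivAt_abs_le {f : ℝ → ℝ} {C : ℝ}
    (h : ∀ x, ∃ d, HasDerivAt f d x ∧ |d| ≤ C) : LipschitzWith C.toNNReal f := by
  choose d hd using h
  refine lipschitzWith_of_nnnorm_deriv_le (fun x => (hd x).1.differentiableAt) fun x => ?_
  rw [(hd x).1.deriv, ← NNReal.coe_le_coe, coe_nnnorm, norm_eq_abs, coe_toNNReal']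
  exact (hd x).2.trans (le_max_left _ _)

noncomputable def gaussianMoment (k : ℕ) (U : ℝ → ℝ) (c x : ℝ) : ℝ :=
  ∫ z, z ^ k * U (x + c * z) ∂gaussianReal 0 1

lemma gaussianMoment_zero (U : ℝ → ℝ) (c x : ℝ) :
    gaussianMoment 0 U c x = ∫ z, U (x + c * z) ∂gaussianReal 0 1 := by
  simp [gaussianMoment]

lemma gaussianMoment_one (U : ℝ → ℝ) (c x : ℝ) :
    gaussianMoment 1 U c x = ∫ z, z * U (x + c * z) ∂gaussianReal 0 1 := by
  simp [gaussianMoment]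

lemma gaussianMoment_eq_integral_comp_sub (k : ℕ) (U : ℝ → ℝ) {c : ℝ} (hc : c ≠ 0) (x : ℝ) :
    gaussianMoment k U c x =
      ∫ t, U (c * t) * ((t - x / c) ^ k * gaussianPDFReal 0 1 (t - x / c)) := by
  rw [gaussianMoment, integral_gaussianReal_eq_integral_smul one_ne_zero]
  conv_rhs => rw [← integral_add_left_eq_self _ (x / c)]
  congr 1 with z
  rw [add_sub_cancel_left, mul_add, mul_div_cancel₀ x hc, smul_eq_mul]
  ring

lemma integrable_pow_mul_gaussianMoment {U : ℝ → ℝ} {B : ℝ} (hU : Measurable U)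
    (hUB : ∀ t, |U t| ≤ B) (k : ℕ) (c x : ℝ) :
    Integrable (fun z => z ^ k * U (x + c * z)) (gaussianReal 0 1) :=
  (integrable_pow_of_mem_interior_integrableExpSet (X := id)
    (by simp [integrableExpSet_id_gaussianReal]) k).mul_bdd
    (hU.comp (measurable_const.add (measurable_const_mul c))).aestronglyMeasurable
    (ae_of_all _ fun _ => hUB _)

theorem hasDerivAt_gaussianMoment {U : ℝ → ℝ} {B : ℝ} (hU : Measurable U) (hUB : ∀ t, |U t| ≤ B)
    (k : ℕ) {c : ℝ} (hc : c ≠ 0) (x : ℝ) :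
    HasDerivAt (gaussianMoment k U c)
      (c⁻¹ * (gaussianMoment (k + 1) U c x - k * gaussianMoment (k - 1) U c x)) x := by
  set V : ℝ → ℝ := fun t => U (c * t)
  set ψ : ℕ → ℝ → ℝ := fun j u => u ^ j * gaussianPDFReal 0 1 u
  have hV : AEStronglyMeasurable V := (hU.comp (measurable_const_mul c)).aestronglyMeasurable
  have hVB : ∀ t, |V t| ≤ B := fun t => hUB _
  have hψm : ∀ j, AEStronglyMeasurable (ψ j) := fun j =>
    ((measurable_id.pow_const j).mul (measurable_gaussianPDFReal 0 1)).aestronglyMeasurable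
  have hψ : ∀ u, HasDerivAt (ψ k) (k * ψ (k - 1) u - ψ (k + 1) u) u := fun u =>
    ((hasDerivAt_pow k u).mul (hasDerivAt_gaussianPDFReal_zero_one u)).congr_deriv (by
      simp only [ψ]; ring)
  have hψ'C : ∀ u, |k * ψ (k - 1) u - ψ (k + 1) u| ≤
      (k * (1 + 4 ^ (k - 1) * (k - 1)!) + (1 + 4 ^ (k + 1) * (k + 1)!)) * exp (-u ^ 2 / 4) := by
    intro u
    have h₁ := abs_pow_mul_gaussianPDFReal_le (k - 1) u
    have h₂ := abs_pow_mul_gaussianPDFReal_le (k + 1) u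
    calc |k * ψ (k - 1) u - ψ (k + 1) u| ≤ k * |ψ (k - 1) u| + |ψ (k + 1) u| := by
          simpa [abs_mul] using abs_sub (k * ψ (k - 1) u) (ψ (k + 1) u)
      _ ≤ _ := by nlinarith [(Nat.cast_nonneg k : (0 : ℝ) ≤ k)]
  have hG := hasDerivAt_integral_mul_comp_sub hV hVB hψ (abs_pow_mul_gaussianPDFReal_le k) hψ'C
    (x / c)
  have hint : ∀ j, Integrable (fun t => V t * ψ j (t - x / c)) := fun j =>
    integrable_mul_comp_sub hV hVB (hψm j) (abs_pow_mul_gaussianPDFReal_le j) _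
  have hsplit : ∫ t, V t * (k * ψ (k - 1) (t - x / c) - ψ (k + 1) (t - x / c)) =
      k * gaussianMoment (k - 1) U c x - gaussianMoment (k + 1) U c x := by
    simp_rw [gaussianMoment_eq_integral_comp_sub _ U hc, mul_sub, mul_left_comm (V _)]
    rw [integral_sub ((hint _).const_mul _) (hint _), integral_const_mul]
  rw [show gaussianMoment k U c = fun x => ∫ t, V t * ψ k (t - x / c) from
    funext (gaussianMoment_eq_integral_comp_sub k U hc)]
  refine (hG.comp x ((hasDerivAt_id x).div_const c)).congr_deriv ?_
  rw [hsplit]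
  ring

lemma integral_integral_sub_sq_mul_eq_gaussianMoment {U : ℝ → ℝ} {B : ℝ} (hU : Measurable U)
    (hUB : ∀ t, |U t| ≤ B) (c x : ℝ) :
    ∫ z, ∫ z', (z - z') ^ 2 * (U (x + c * z) * U (x + c * z'))
        ∂gaussianReal 0 1 ∂gaussianReal 0 1 =
      2 * (gaussianMoment 2 U c x * gaussianMoment 0 U c x - gaussianMoment 1 U c x ^ 2) := by
  have h₀ := integrable_pow_mul_gaussianMoment hU hUB 0 c x
  have h₁ := integrable_pow_mul_gaussianMoment hU hUB 1 c x
  simp only [pow_zero, one_mul, pow_one] at h₀ h₁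
  rw [integral_integral_sub_sq_mul h₀ h₁ (integrable_pow_mul_gaussianMoment hU hUB 2 c x),
    gaussianMoment_zero, gaussianMoment_one, gaussianMoment]

theorem hasDerivAt_inv_mul_gaussianMoment_one_div_zero {U : ℝ → ℝ} {B : ℝ} (hU : Measurable U)
    (hUB : ∀ t, |U t| ≤ B) {c : ℝ} (hc : c ≠ 0) {x : ℝ} (hx : gaussianMoment 0 U c x ≠ 0) :
    HasDerivAt (fun y => c⁻¹ * gaussianMoment 1 U c y / gaussianMoment 0 U c y)
      ((c ^ 2)⁻¹ * ((gaussianMoment 2 U c x * gaussianMoment 0 U c x -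
        gaussianMoment 1 U c x ^ 2) / gaussianMoment 0 U c x ^ 2 - 1)) x := by
  have h : HasDerivAt (fun y => c⁻¹ * (gaussianMoment 1 U c y / gaussianMoment 0 U c y)) _ x :=
    ((hasDerivAt_gaussianMoment hU hUB 1 hc x).div
      (hasDerivAt_gaussianMoment hU hUB 0 hc x) hx).const_mul c⁻¹
  simp only [← mul_div_assoc] at h
  refine h.congr_deriv ?_
  field_simp
  push_cast
  ring

theorem exists_hasDerivAt_abs_le_of_integral_integral_sub_sq_mul_le {U : ℝ → ℝ}
    (hU : Measurable U) (h0 : ∀ t, 0 ≤ U t) (h1 : ∀ t, U t ≤ 1) {c : ℝ} (hc : c ≠ 0) {x K : ℝ}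
    (hpos : 0 < gaussianMoment 0 U c x)
    (hK : ∫ z, ∫ z', (z - z') ^ 2 * (U (x + c * z) * U (x + c * z'))
        ∂gaussianReal 0 1 ∂gaussianReal 0 1 ≤
      K * ∫ z, ∫ z', U (x + c * z) * U (x + c * z') ∂gaussianReal 0 1 ∂gaussianReal 0 1) :
    ∃ d, HasDerivAt (fun y => c⁻¹ * gaussianMoment 1 U c y / gaussianMoment 0 U c y) d x ∧
      |d| ≤ (c ^ 2)⁻¹ * (K / 2 + 1) := by
  have hUB : ∀ t, |U t| ≤ 1 := fun t => abs_le.2 ⟨by linarith [h0 t], h1 t⟩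
  have hvar := integral_integral_sub_sq_mul_eq_gaussianMoment hU hUB c x
  have hvar_nonneg : 0 ≤ gaussianMoment 2 U c x * gaussianMoment 0 U c x -
      gaussianMoment 1 U c x ^ 2 := by
    have : 0 ≤ ∫ z, ∫ z', (z - z') ^ 2 * (U (x + c * z) * U (x + c * z'))
        ∂gaussianReal 0 1 ∂gaussianReal 0 1 :=
      integral_nonneg fun z => integral_nonneg fun z' =>
        mul_nonneg (sq_nonneg _) (mul_nonneg (h0 _) (h0 _))
    linarith
  rw [hvar, integral_integral_mul, ← gaussianMoment_zero] at hK
  refine ⟨_, hasDerivAt_inv_mul_gaussianMoment_one_div_zero hU hUB hc hpos.ne', ?_⟩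
  rw [abs_mul, abs_of_pos (by positivity)]
  refine mul_le_mul_of_nonneg_left (abs_le.2 ⟨?_, ?_⟩) (by positivity)
  · have := div_nonneg hvar_nonneg (sq_nonneg (gaussianMoment 0 U c x))
    nlinarith [mul_pos hpos hpos]
  · have : (gaussianMoment 2 U c x * gaussianMoment 0 U c x - gaussianMoment 1 U c x ^ 2) /
        gaussianMoment 0 U c x ^ 2 ≤ K / 2 := by
      rw [div_le_iff₀ (by positivity)]
      linarith
    linarith

theorem Fq_lipschitz_general
    (U : ℝ → ℝ) (hmeas : Measurable U) (h0 : ∀ x, 0 ≤ U x) (h1 : ∀ x, U x ≤ 1)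
    (q : ℝ) (hq1 : q < 1)
    (hpos : ∀ x : ℝ, 0 < ∫ z, U (x + Real.sqrt (1 - q) * z) ∂(gaussianReal 0 1))
    (K₂ : ℝ)
    (hK : ∀ x : ℝ,
      (∫ z, ∫ z', (z - z') ^ 2 *
            (U (x + Real.sqrt (1 - q) * z) * U (x + Real.sqrt (1 - q) * z'))
          ∂(gaussianReal 0 1) ∂(gaussianReal 0 1))
        ≤ K₂ * ∫ z, ∫ z',
            U (x + Real.sqrt (1 - q) * z) * U (x + Real.sqrt (1 - q) * z')
          ∂(gaussianReal 0 1) ∂(gaussianReal 0 1)) :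
    (∀ x : ℝ, ∃ d : ℝ,
      HasDerivAt (fun y : ℝ =>
          (1 - q) ^ (-(1 / 2) : ℝ) *
            (∫ z, z * U (y + Real.sqrt (1 - q) * z) ∂(gaussianReal 0 1)) /
            (∫ z, U (y + Real.sqrt (1 - q) * z) ∂(gaussianReal 0 1))) d x ∧
        |d| ≤ (1 - q)⁻¹ * (K₂ / 2 + 1)) ∧
    LipschitzWith (Real.toNNReal ((1 - q)⁻¹ * (K₂ / 2 + 1)))
      (fun y : ℝ =>
        (1 - q) ^ (-(1 / 2) : ℝ) *
          (∫ z, z * U (y + Real.sqrt (1 - q) * z) ∂(gaussianReal 0 1)) /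
          (∫ z, U (y + Real.sqrt (1 - q) * z) ∂(gaussianReal 0 1))) := by
  have hq : 0 < 1 - q := sub_pos.2 hq1
  have hF : (fun y => (1 - q) ^ (-(1 / 2) : ℝ) *
        (∫ z, z * U (y + √(1 - q) * z) ∂gaussianReal 0 1) /
        ∫ z, U (y + √(1 - q) * z) ∂gaussianReal 0 1) =
      fun y => (√(1 - q))⁻¹ * gaussianMoment 1 U √(1 - q) y / gaussianMoment 0 U √(1 - q) y := by
    simp only [gaussianMoment_zero, gaussianMoment_one, rpow_neg hq.le, ← sqrt_eq_rpow]
  have hderiv : ∀ x, ∃ d, HasDerivAt (fun y => (√(1 - q))⁻¹ * gaussianMoment 1 U √(1 - q) y /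
      gaussianMoment 0 U √(1 - q) y) d x ∧ |d| ≤ (1 - q)⁻¹ * (K₂ / 2 + 1) := fun x => by
    simpa only [sq_sqrt hq.le] using exists_hasDerivAt_abs_le_of_integral_integral_sub_sq_mul_le
      hmeas h0 h1 (sqrt_pos.2 hq).ne' ((gaussianMoment_zero U _ x).symm ▸ hpos x) (hK x)
  rw [hF]
  exact ⟨hderiv, lipschitzWith_of_forall_hasDerivAt_abs_le hderiv⟩

/-- For measurable `U : ℝ → [0,1]` with positive Gaussian smoothings and
`F_q(x) = (1−q)^{−1/2} E_ξ[ξ U(x+√(1−q)ξ)] / E_ξ[U(x+√(1−q)ξ)]` (`q ∈ [0,1)`), if for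
`c = √(1−q)` and all `x` the ratio
`E[(ξ−ξ')²U(x+cξ)U(x+cξ')] / E[U(x+cξ)U(x+cξ')] ≤ K₂`, then `F_q` is differentiable with
`‖F_q'‖_∞ ≤ (1−q)^{−1}(K₂/2 + 1)`, hence `F_q` is Lipschitz with that constant. -/
theorem Fq_lipschitz
    (U : ℝ → ℝ) (hmeas : Measurable U) (h0 : ∀ x, 0 ≤ U x) (h1 : ∀ x, U x ≤ 1)
    (q : ℝ) (hq0 : 0 ≤ q) (hq1 : q < 1)
    (hpos : ∀ x : ℝ, 0 < ∫ z, U (x + Real.sqrt (1 - q) * z) ∂(gaussianReal 0 1))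
    (K₂ : ℝ)
    (hK : ∀ x : ℝ,
      (∫ z, ∫ z', (z - z') ^ 2 *
            (U (x + Real.sqrt (1 - q) * z) * U (x + Real.sqrt (1 - q) * z'))
          ∂(gaussianReal 0 1) ∂(gaussianReal 0 1))
        ≤ K₂ * ∫ z, ∫ z',
            U (x + Real.sqrt (1 - q) * z) * U (x + Real.sqrt (1 - q) * z')
          ∂(gaussianReal 0 1) ∂(gaussianReal 0 1)) :
    (∀ x : ℝ, ∃ d : ℝ,
      HasDerivAt (fun y : ℝ =>
          (1 - q) ^ (-(1 / 2) : ℝ) *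
            (∫ z, z * U (y + Real.sqrt (1 - q) * z) ∂(gaussianReal 0 1)) /
            (∫ z, U (y + Real.sqrt (1 - q) * z) ∂(gaussianReal 0 1))) d x ∧
        |d| ≤ (1 - q)⁻¹ * (K₂ / 2 + 1)) ∧
    LipschitzWith (Real.toNNReal ((1 - q)⁻¹ * (K₂ / 2 + 1)))
      (fun y : ℝ =>
        (1 - q) ^ (-(1 / 2) : ℝ) *
          (∫ z, z * U (y + Real.sqrt (1 - q) * z) ∂(gaussianReal 0 1)) /
          (∫ z, U (y + Real.sqrt (1 - q) * z) ∂(gaussianReal 0 1))) :=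
  Fq_lipschitz_general U hmeas h0 h1 q hq1 hpos K₂ hK
end

section
/- Let c ∈ (0, 1/3) and let v¹, …, vⁿ be unit vectors in ℝⁿ with (vⁱ, vʲ) ≤ c for all i ≠ j, indexed (as is always possible) so that ‖P_{ℓ−1} v^ℓ‖ = min{‖P_{ℓ−1} v^k‖ : ℓ ≤ k ≤ n} for all ℓ, where P_m denotes orthogonal projection onto span{v¹,…,v^m}. Suppose m is such that ‖P_m v^{m+1}‖ > (3c)^{1/2} and there exist K = 2 + ⌈1/c⌉ indices m < i₁ < … < i_K ≤ n with ‖P_m(v^{i_a} − v^{i_b})‖ ≤ c for all a, b ≤ K. Then a contradiction follows; i.e., under these hypotheses no such configuration exists, because the unit vectors x^a = (I−P_m)v^{i_a}/‖(I−P_m)v^{i_a}‖ satisfy (x^a, x^b) ≤ −c for all a ≠ b, and K unit vectors with pairwise inner products ≤ −c cannot exist when c(K−1) > 1. -/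
/-!
Let `P` be the projection onto the span of the first `m` vectors. By the choice of indexing,
every `P v^{i_a}` has squared norm `> 3c`, and the `P v^{i_a}` lie within `c` of each other,
so `(P v^{i_a}, P v^{i_b}) > 3c - c²/2 ≥ 2c`. Since `(v^{i_a}, v^{i_b}) ≤ c`, the orthogonal
components `(I - P) v^{i_a}` have pairwise inner products `≤ -c`. But `K` vectors of norm
at most `1` with pairwise inner products `≤ -c` satisfy `0 ≤ ‖∑ x^a‖² ≤ K (1 - c (K - 1))`,
i.e. `K ≤ 1 + 1/c`, which `K = 2 + ⌈1/c⌉` violates.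
-/

open Finset RealInnerProductSpace

variable {E : Type*} [NormedAddCommGroup E] [InnerProductSpace ℝ E]

theorem card_le_one_add_inv_of_pairwise_inner_le_neg {ι : Type*} [Fintype ι] {x : ι → E}
    {c : ℝ} (hc : 0 < c) (hx : ∀ a, ‖x a‖ ≤ 1) (hneg : Pairwise fun a b => ⟪x a, x b⟫ ≤ -c) :
    (Fintype.card ι : ℝ) ≤ 1 + 1 / c := by
  set K := Fintype.card ι
  have hrow : ∀ a, ∑ b, ⟪x a, x b⟫ ≤ 1 - c * (K - 1) := by
    classical
    intro a
    have hself : ⟪x a, x a⟫ ≤ 1 := by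
      rw [real_inner_self_eq_norm_sq]
      exact pow_le_one₀ (norm_nonneg _) (hx a)
    have hrest : ∑ b ∈ univ.erase a, ⟪x a, x b⟫ ≤ ∑ _b ∈ univ.erase a, -c :=
      sum_le_sum fun b hb => hneg (ne_of_mem_erase hb).symm
    rw [← add_sum_erase _ _ (mem_univ a)]
    simp only [sum_const, card_erase_of_mem (mem_univ a), card_univ, nsmul_eq_mul,
      Nat.cast_sub (Fintype.card_pos_iff.mpr ⟨a⟩)] at hrest
    push_cast at hrest
    linarith
  have hgram : 0 ≤ ∑ a, ∑ b, ⟪x a, x b⟫ := by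
    have := real_inner_self_nonneg (x := ∑ a, x a)
    rw [sum_inner] at this
    simpa only [inner_sum] using this
  have hK : 0 ≤ K * (1 - c * (K - 1)) := by
    calc (0 : ℝ) ≤ ∑ a, ∑ b, ⟪x a, x b⟫ := hgram
      _ ≤ ∑ _a : ι, (1 - c * (K - 1)) := sum_le_sum fun a _ => hrow a
      _ = K * (1 - c * (K - 1)) := by rw [sum_const, card_univ, nsmul_eq_mul]
  rcases Nat.eq_zero_or_pos K with hK0 | hKpos
  · rw [hK0, Nat.cast_zero]
    positivity
  · have : c * (K - 1) ≤ 1 := by nlinarith [(Nat.cast_pos (α := ℝ)).mpr hKpos]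
    rw [← sub_le_iff_le_add', le_div_iff₀ hc]
    linarith

theorem inner_lt_of_lt_norm_sq_of_norm_sub_le {a b : E} {r c : ℝ} (ha : r < ‖a‖ ^ 2)
    (hb : r < ‖b‖ ^ 2) (hab : ‖a - b‖ ≤ c) : r - c ^ 2 / 2 < ⟪a, b⟫ := by
  have hsq : ‖a - b‖ ^ 2 ≤ c ^ 2 := pow_le_pow_left₀ (norm_nonneg _) hab 2
  have := norm_sub_sq_real a b
  linarith

namespace Submodule

variable (K : Submodule ℝ E) [K.HasOrthogonalProjection]

theorem inner_eq_inner_starProjection_add_inner_sub_starProjection (x y : E) :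
    ⟪x, y⟫ = ⟪K.starProjection x, K.starProjection y⟫ +
      ⟪x - K.starProjection x, y - K.starProjection y⟫ := by
  have hx : ⟪x - K.starProjection x, K.starProjection y⟫ = 0 :=
    K.starProjection_inner_eq_zero x _ (K.starProjection_apply_mem y)
  have hy : ⟪K.starProjection x, y - K.starProjection y⟫ = 0 := by
    rw [real_inner_comm]
    exact K.starProjection_inner_eq_zero y _ (K.starProjection_apply_mem x)
  conv_lhs => rw [← add_sub_cancel (K.starProjection x) x, ← add_sub_cancel (K.starProjection y) y]
  rw [inner_add_left, inner_add_right, inner_add_right, hx, hy]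
  ring

theorem norm_sub_starProjection_le (x : E) : ‖x - K.starProjection x‖ ≤ ‖x‖ := by
  have := K.inner_eq_inner_starProjection_add_inner_sub_starProjection x x
  simp only [real_inner_self_eq_norm_sq] at this
  exact le_of_sq_le_sq (by nlinarith [sq_nonneg ‖K.starProjection x‖]) (norm_nonneg _)

theorem inner_sub_starProjection_le_neg {x y : E} {c : ℝ} (hc : c ≤ 2) (hxy : ⟪x, y⟫ ≤ c)
    (hx : 3 * c < ‖K.starProjection x‖ ^ 2) (hy : 3 * c < ‖K.starProjection y‖ ^ 2)
    (hclose : ‖K.starProjection x - K.starProjection y‖ ≤ c) :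
    ⟪x - K.starProjection x, y - K.starProjection y⟫ ≤ -c := by
  have hproj := inner_lt_of_lt_norm_sq_of_norm_sub_le hx hy hclose
  have hc0 : 0 ≤ c := (norm_nonneg _).trans hclose
  rw [K.inner_eq_inner_starProjection_add_inner_sub_starProjection x y] at hxy
  nlinarith

end Submodule

/-- Let `c ∈ (0,1/3)` and `v¹,…,vⁿ` be unit vectors in `ℝⁿ` with pairwise
inner products `≤ c`, indexed so that `‖P_{ℓ−1} v^ℓ‖` is minimal among `‖P_{ℓ−1} v^k‖`,
`k ≥ ℓ` (here `P m` is orthogonal projection onto the span of the first `m` vectors).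
If for some `m` one has `‖P_m v^{m+1}‖ > (3c)^{1/2}` and there exist `K = 2 + ⌈1/c⌉`
indices `i₁ < … < i_K` beyond `m` with `‖P_m (v^{i_a} − v^{i_b})‖ ≤ c` for all `a, b`,
then a contradiction follows. -/
theorem no_cluster_beyond_projection_threshold
    (n : ℕ) (c : ℝ) (hc0 : 0 < c) (hc1 : c < 1 / 3)
    (v : Fin n → EuclideanSpace ℝ (Fin n))
    (hunit : ∀ i, ‖v i‖ = 1)
    (hip : ∀ i j, i ≠ j → (inner ℝ (v i) (v j) : ℝ) ≤ c)
    (P : ℕ → EuclideanSpace ℝ (Fin n) → EuclideanSpace ℝ (Fin n))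
    (hP : ∀ (m : ℕ) (x : EuclideanSpace ℝ (Fin n)),
      P m x = (Submodule.orthogonalProjectionOnto
        (Submodule.span ℝ (v '' {j : Fin n | (j : ℕ) < m})) x : EuclideanSpace ℝ (Fin n)))
    (hindex : ∀ ℓ k : Fin n, ℓ ≤ k → ‖P (ℓ : ℕ) (v ℓ)‖ ≤ ‖P (ℓ : ℕ) (v k)‖)
    (m : ℕ) (hm : m < n)
    (hbig : Real.sqrt (3 * c) < ‖P m (v ⟨m, hm⟩)‖)
    (ι : Fin (2 + ⌈1 / c⌉₊) → Fin n)
    (hmono : StrictMono ι)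
    (hgt : ∀ a, m ≤ (ι a : ℕ))
    (hclose : ∀ a b, ‖P m (v (ι a) - v (ι b))‖ ≤ c) :
    False := by
  set S := Submodule.span ℝ (v '' {j : Fin n | (j : ℕ) < m})
  have hPS : P m = S.starProjection := funext (hP m)
  have hproj : ∀ a, 3 * c < ‖S.starProjection (v (ι a))‖ ^ 2 := fun a =>
    Real.lt_sq_of_sqrt_lt <| hPS ▸ hbig.trans_le (hindex ⟨m, hm⟩ (ι a) (hgt a))
  have hcard := card_le_one_add_inv_of_pairwise_inner_le_neg hc0
    (x := fun a => v (ι a) - S.starProjection (v (ι a)))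
    (fun a => (S.norm_sub_starProjection_le _).trans_eq (hunit _))
    (fun a b hab => S.inner_sub_starProjection_le_neg (by linarith)
      (hip _ _ (hmono.injective.ne hab)) (hproj a) (hproj b)
      (by simpa only [hPS, map_sub] using hclose a b))
  rw [Fintype.card_fin, Nat.cast_add, Nat.cast_two] at hcard
  linarith [Nat.le_ceil (1 / c)]
end

section
/- (Pisier's inequality, exponential form.) Let f : ℝⁿ → ℝ be C¹ and let X, Y be independent standard Gaussian vectors in ℝⁿ. Then for every convex g : ℝ → ℝ, E[g(f(X) − f(Y))] ≤ E[g((π/2)(∇f(X), Y))]. In particular, for every s ∈ ℝ, E[exp(s(f(X) − f(Y)))] ≤ E[exp((s²π²/8)‖∇f(X)‖²)], where the last step additionally uses that Y is independent of X and E_Y exp(λ(v,Y)) = exp(λ²‖v‖²/2). -/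
/-!
For `θ ∈ [0, π/2]` rotate the pair of independent Gaussians: `(X_θ, Y_θ) = rotation θ (Y, X)`,
so that `X_0 = Y`, `X_{π/2} = X` and `d/dθ X_θ = Y_θ`. Then
`f X - f Y = ⨍_{[0, π/2]} (π/2) Df(X_θ) Y_θ dθ`, and Jensen's inequality moves `g` inside the
average. A centered Gaussian pair is rotation invariant, so each `(X_θ, Y_θ)` has the law of
`(X, Y)` and, after taking expectations, the average over `θ` is `E g((π/2) Df(X) Y)`.
For `g = exp (s ·)`, integrating out `Y` first gives the Gaussian moment generating function
`E_Y exp (c Df(x) Y) = exp (c² Var[Df(x)] / 2)`, and `Var[L] = ‖L‖²` for the standard Gaussian.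
-/

open MeasureTheory ProbabilityTheory Real Set Function
open scoped RealInnerProductSpace
open ContinuousLinearMap (rotation)

section Averaging

variable {Θ X : Type*} [MeasurableSpace Θ] [MeasurableSpace X] {ν : Measure Θ} {μ : Measure X}
  {R : Θ → X → X}

theorem measurePreserving_uncurry_of_forall [IsProbabilityMeasure ν] [SFinite μ]
    (hR : Measurable (uncurry R)) (hRμ : ∀ θ, MeasurePreserving (R θ) μ μ) :
    MeasurePreserving (uncurry R) (ν.prod μ) μ := by
  refine ⟨hR, Measure.ext fun s hs => ?_⟩
  rw [Measure.map_apply hR hs, Measure.prod_apply (hR hs)]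
  change ∫⁻ θ, μ (R θ ⁻¹' s) ∂ν = μ s
  simp [(hRμ _).measure_preimage hs.nullMeasurableSet]

variable [IsFiniteMeasure ν] [NeZero ν] [SFinite μ] (hR : Measurable (uncurry R))
  (hRμ : ∀ θ, MeasurePreserving (R θ) μ μ) {g : ℝ → ℝ} (hg : ConvexOn ℝ univ g) {u H : X → ℝ}
  (hu : ∀ p, u p = ⨍ θ, H (R θ p) ∂ν) (hHR : ∀ p, Integrable (fun θ => H (R θ p)) ν)
include hR hRμ hg hu hHR

theorem integral_comp_le_of_eq_average
    (hgu : Integrable (fun p => g (u p)) μ) (hgH : Integrable (fun p => g (H p)) μ) :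
    ∫ p, g (u p) ∂μ ≤ ∫ p, g (H p) ∂μ := by
  -- `⨍ θ, _ ∂ν` is by definition `∫ θ, _ ∂ν'`, which is what `hu p ▸` below relies on.
  set ν' := (ν univ)⁻¹ • ν
  have hΦ := measurePreserving_uncurry_of_forall (ν := ν') hR hRμ
  have hint : Integrable (fun q : Θ × X => g (H (R q.1 q.2))) (ν'.prod μ) :=
    (hΦ.integrable_comp hgH.aestronglyMeasurable).2 hgH
  have jensen : ∀ᵐ p ∂μ, g (u p) ≤ ∫ θ, g (H (R θ p)) ∂ν' := by
    refine hint.prod_left_ae.mono fun p hp => hu p ▸ ?_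
    exact hg.map_integral_le (hg.continuousOn isOpen_univ) isClosed_univ (by simp)
      ((hHR p).smul_measure (ENNReal.inv_ne_top.2 (NeZero.ne _))) hp
  calc ∫ p, g (u p) ∂μ ≤ ∫ p, ∫ θ, g (H (R θ p)) ∂ν' ∂μ :=
        integral_mono_ae hgu hint.integral_prod_right jensen
    _ = ∫ q, g (H (uncurry R q)) ∂(ν'.prod μ) := (integral_prod_symm _ hint).symm
    _ = ∫ p, g (H p) ∂μ := by
        refine (integral_map hΦ.aemeasurable (hΦ.map_eq ▸ hgH.aestronglyMeasurable)).symm.trans ?_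
        rw [hΦ.map_eq]

theorem lintegral_ofReal_comp_le_of_eq_average (hg0 : ∀ x, 0 ≤ g x) (hH : Measurable H)
    (hgHR : ∀ p, Integrable (fun θ => g (H (R θ p))) ν) :
    ∫⁻ p, ENNReal.ofReal (g (u p)) ∂μ ≤ ∫⁻ p, ENNReal.ofReal (g (H p)) ∂μ := by
  set ν' := (ν univ)⁻¹ • ν
  have hΦ := measurePreserving_uncurry_of_forall (ν := ν') hR hRμ
  have hmeas : Measurable fun p => ENNReal.ofReal (g (H p)) :=
    ((continuousOn_univ.1 (hg.continuousOn isOpen_univ)).measurable.comp hH).ennreal_ofReal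
  have hν' : (ν univ)⁻¹ ≠ ⊤ := ENNReal.inv_ne_top.2 (NeZero.ne _)
  calc ∫⁻ p, ENNReal.ofReal (g (u p)) ∂μ
      ≤ ∫⁻ p, ∫⁻ θ, ENNReal.ofReal (g (H (R θ p))) ∂ν' ∂μ := by
        refine lintegral_mono fun p => ?_
        rw [← ofReal_integral_eq_lintegral_ofReal ((hgHR p).smul_measure hν')
          (.of_forall fun _ => hg0 _), hu p]
        exact ENNReal.ofReal_le_ofReal <| hg.map_average_le (hg.continuousOn isOpen_univ)
          isClosed_univ (by simp) (hHR p) (hgHR p)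
    _ = ∫⁻ q, ENNReal.ofReal (g (H (uncurry R q))) ∂(ν'.prod μ) :=
        (lintegral_prod_symm _ (hmeas.comp hR).aemeasurable).symm
    _ = ∫⁻ p, ENNReal.ofReal (g (H p)) ∂μ := hΦ.lintegral_comp hmeas

end Averaging

instance : NeZero (volume.restrict (Ioc (0 : ℝ) (π / 2))) :=
  ⟨by simp [Measure.restrict_eq_zero, pi_pos]⟩

section Rotation

variable {E : Type*} [NormedAddCommGroup E] [NormedSpace ℝ E]

theorem continuous_rotation_apply (p : E × E) : Continuous fun θ : ℝ => rotation θ p := by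
  simp only [ContinuousLinearMap.rotation_apply]
  fun_prop

theorem measurable_uncurry_rotation_swap [MeasurableSpace E] [BorelSpace E]
    [SecondCountableTopology E] : Measurable (uncurry fun θ (p : E × E) => rotation θ p.swap) := by
  simp only [ContinuousLinearMap.rotation_apply]
  fun_prop

theorem hasDerivAt_rotation_fst (p : E × E) (θ : ℝ) :
    HasDerivAt (fun t => (rotation t p).1) (rotation θ p).2 θ := by
  simp only [ContinuousLinearMap.rotation_apply, neg_smul]
  simpa using ((hasDerivAt_cos θ).smul_const p.1).fun_add ((hasDerivAt_sin θ).smul_const p.2)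

variable {f : E → ℝ} (hf : ContDiff ℝ 1 f)
include hf

theorem continuous_fderiv_apply_rotation (p : E × E) :
    Continuous fun θ => fderiv ℝ f (rotation θ p).1 (rotation θ p).2 :=
  (hf.continuous_fderiv_apply one_ne_zero).comp (continuous_rotation_apply p)

theorem sub_eq_integral_fderiv_rotation (p : E × E) :
    f p.1 - f p.2 = ∫ θ in 0..π / 2, fderiv ℝ f (rotation θ p.swap).1 (rotation θ p.swap).2 := by
  have hderiv (θ : ℝ) : HasDerivAt (fun t => f (rotation t p.swap).1)
      (fderiv ℝ f (rotation θ p.swap).1 (rotation θ p.swap).2) θ :=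
    (hf.differentiable one_ne_zero _).hasFDerivAt.comp_hasDerivAt θ (hasDerivAt_rotation_fst _ θ)
  rw [intervalIntegral.integral_eq_sub_of_hasDerivAt (fun θ _ => hderiv θ)
    ((continuous_fderiv_apply_rotation hf _).intervalIntegrable _ _)]
  simp [ContinuousLinearMap.rotation_apply]

theorem sub_eq_average_fderiv_rotation (p : E × E) :
    f p.1 - f p.2 = ⨍ θ in Ioc 0 (π / 2),
      π / 2 * fderiv ℝ f (rotation θ p.swap).1 (rotation θ p.swap).2 := by
  rw [setAverage_eq, Real.volume_real_Ioc_of_le (by positivity), sub_zero,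
    ← intervalIntegral.integral_of_le (by positivity),
    intervalIntegral.integral_const_mul, ← sub_eq_integral_fderiv_rotation hf, smul_eq_mul]
  field_simp

end Rotation

section Gaussian

variable {E : Type*} [NormedAddCommGroup E] [NormedSpace ℝ E] [CompleteSpace E]
  [SecondCountableTopology E] [MeasurableSpace E] [BorelSpace E] {μ : Measure E} [IsGaussian μ]
  (hμ : μ[id] = 0)
include hμ

theorem measurePreserving_rotation_swap (θ : ℝ) :
    MeasurePreserving (fun p : E × E => rotation θ p.swap) (μ.prod μ) (μ.prod μ) :=
  MeasurePreserving.comp ⟨(rotation θ).continuous.measurable, IsGaussian.map_rotation_eq_self hμ θ⟩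
    Measure.measurePreserving_swap

theorem lintegral_exp_mul_dual (L : StrongDual ℝ E) (c : ℝ) :
    ∫⁻ y, ENNReal.ofReal (exp (c * L y)) ∂μ = ENNReal.ofReal (exp (c ^ 2 * Var[L; μ] / 2)) := by
  have hL : μ.map L = gaussianReal 0 (Var[L; μ]).toNNReal := by
    rw [IsGaussian.map_eq_gaussianReal, IsGaussian.integral_dual, show ∫ x, x ∂μ = 0 from hμ,
      map_zero]
  rw [← lintegral_map (f := fun t => ENNReal.ofReal (exp (c * t))) (by fun_prop)
      L.continuous.measurable, hL,
    ← ofReal_integral_eq_lintegral_ofReal (integrable_exp_mul_gaussianReal c)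
      (.of_forall fun _ => (exp_pos _).le)]
  change ENNReal.ofReal (mgf id _ c) = _
  rw [mgf_id_gaussianReal, Real.coe_toNNReal _ (variance_nonneg _ _)]
  ring_nf

variable {f : E → ℝ} (hf : ContDiff ℝ 1 f)
include hf

theorem integral_comp_sub_le_integral_comp_fderiv {g : ℝ → ℝ} (hg : ConvexOn ℝ univ g)
    (hint_sub : Integrable (fun p : E × E => g (f p.1 - f p.2)) (μ.prod μ))
    (hint_fderiv : Integrable (fun p : E × E => g (π / 2 * fderiv ℝ f p.1 p.2)) (μ.prod μ)) :
    ∫ p, g (f p.1 - f p.2) ∂(μ.prod μ) ≤ ∫ p, g (π / 2 * fderiv ℝ f p.1 p.2) ∂(μ.prod μ) :=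
  integral_comp_le_of_eq_average (ν := volume.restrict (Ioc 0 (π / 2)))
    measurable_uncurry_rotation_swap (measurePreserving_rotation_swap hμ) hg
    (sub_eq_average_fderiv_rotation hf)
    (fun p => (continuous_const.mul (continuous_fderiv_apply_rotation hf p.swap)).integrableOn_Ioc)
    hint_sub hint_fderiv

theorem lintegral_exp_sub_le (s : ℝ) :
    ∫⁻ p, ENNReal.ofReal (exp (s * (f p.1 - f p.2))) ∂(μ.prod μ)
      ≤ ∫⁻ x, ENNReal.ofReal (exp (s ^ 2 * π ^ 2 / 8 * Var[fderiv ℝ f x; μ])) ∂μ := by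
  have hconv : ConvexOn ℝ univ fun t => exp (s * t) := by
    simpa [Function.comp_def] using convexOn_exp.comp_linearMap (LinearMap.lsmul ℝ ℝ s)
  have hsection (p : E × E) : Continuous fun θ =>
      π / 2 * fderiv ℝ f (rotation θ p.swap).1 (rotation θ p.swap).2 :=
    continuous_const.mul (continuous_fderiv_apply_rotation hf p.swap)
  calc ∫⁻ p, ENNReal.ofReal (exp (s * (f p.1 - f p.2))) ∂(μ.prod μ)
      ≤ ∫⁻ p, ENNReal.ofReal (exp (s * (π / 2 * fderiv ℝ f p.1 p.2))) ∂(μ.prod μ) :=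
        lintegral_ofReal_comp_le_of_eq_average (ν := volume.restrict (Ioc 0 (π / 2)))
          measurable_uncurry_rotation_swap (measurePreserving_rotation_swap hμ) hconv
          (sub_eq_average_fderiv_rotation hf) (fun p => (hsection p).integrableOn_Ioc)
          (fun _ => (exp_pos _).le)
          (continuous_const.mul (hf.continuous_fderiv_apply one_ne_zero)).measurable
          (fun p => (continuous_exp.comp (continuous_const.mul (hsection p))).integrableOn_Ioc)
    _ = ∫⁻ x, ∫⁻ y, ENNReal.ofReal (exp (s * (π / 2) * fderiv ℝ f x y)) ∂μ ∂μ := by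
        rw [lintegral_prod _ (by fun_prop)]
        simp_rw [mul_assoc]
    _ = ∫⁻ x, ENNReal.ofReal (exp (s ^ 2 * π ^ 2 / 8 * Var[fderiv ℝ f x; μ])) ∂μ := by
        simp_rw [lintegral_exp_mul_dual hμ]
        ring_nf

end Gaussian

/-- Pisier's inequality, exponential form: For `f : ℝⁿ → ℝ` of class `C¹`
and `X, Y` independent standard Gaussian vectors in `ℝⁿ`: for every convex `g : ℝ → ℝ`
(with both integrands integrable), `E[g(f(X) − f(Y))] ≤ E[g((π/2)⟪∇f(X), Y⟫)]`; and for
every `s ∈ ℝ`, `E[exp(s(f(X) − f(Y)))] ≤ E[exp((s²π²/8)‖∇f(X)‖²)]`. -/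
theorem pisier_inequality
    (n : ℕ) (f : EuclideanSpace ℝ (Fin n) → ℝ) (hf : ContDiff ℝ 1 f)
    (μ : Measure (EuclideanSpace ℝ (Fin n)))
    (hμ : μ = Measure.map (MeasurableEquiv.toLp 2 (Fin n → ℝ))
      (Measure.pi fun _ : Fin n => gaussianReal 0 1)) :
    (∀ g : ℝ → ℝ, ConvexOn ℝ Set.univ g →
      Integrable (fun p : EuclideanSpace ℝ (Fin n) × EuclideanSpace ℝ (Fin n) =>
        g (f p.1 - f p.2)) (μ.prod μ) →
      Integrable (fun p : EuclideanSpace ℝ (Fin n) × EuclideanSpace ℝ (Fin n) =>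
        g (Real.pi / 2 * ⟪gradient f p.1, p.2⟫)) (μ.prod μ) →
      (∫ p, g (f p.1 - f p.2) ∂(μ.prod μ))
        ≤ ∫ p, g (Real.pi / 2 * ⟪gradient f p.1, p.2⟫) ∂(μ.prod μ)) ∧
    (∀ s : ℝ,
      (∫⁻ p, ENNReal.ofReal (Real.exp (s * (f p.1 - f p.2))) ∂(μ.prod μ))
        ≤ ∫⁻ p, ENNReal.ofReal
            (Real.exp (s ^ 2 * Real.pi ^ 2 / 8 * ‖gradient f p.1‖ ^ 2)) ∂(μ.prod μ)) := by
  obtain rfl : μ = stdGaussian _ := hμ.trans map_pi_eq_stdGaussian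
  refine ⟨fun g hg hint_sub hint_grad => ?_, fun s => ?_⟩
  · simp only [inner_gradient_left] at hint_grad ⊢
    exact integral_comp_sub_le_integral_comp_fderiv integral_id_stdGaussian hf hg hint_sub hint_grad
  · have hmeas : Measurable fun x =>
        ENNReal.ofReal (exp (s ^ 2 * π ^ 2 / 8 * ‖fderiv ℝ f x‖ ^ 2)) := by
      have := hf.continuous_fderiv one_ne_zero
      fun_prop
    simp only [gradient, LinearIsometryEquiv.norm_map]
    rw [measurePreserving_fst.lintegral_comp hmeas]
    simpa only [variance_dual_stdGaussian] using lintegral_exp_sub_le integral_id_stdGaussian hf s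
end
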